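/- arXiv:2512.00153 — 6 statements merged into one kernel-verified Lean document; each statement's English description precedes it below -/
import Mathlib

section
/- There exists a family A = {f_1, …, f_{λ+1}} of λ+1 maximum (s,t)-flows of G such that for every non-critical edge e ∈ E there is an index i ∈ {1, …, λ+1} with f_i(e) = 0. -/
open Finset

/-- A finite directed multigraph on vertex type `V` with edge type `E`:
each edge `e` has a source `src e` and a target `tgt e`. -/
structure Digraph' (V E : Type) where
  src : E → V
  tgt : E → V

namespace Digraph'

variable {V E : Type} [Fintype V] [DecidableEq V] [Fintype E] [DecidableEq E]

/-- `h : E → ℕ` satisfies flow conservation at every vertex other than `s` and `t`: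
the sum over incoming edges equals the sum over outgoing edges. -/
def Conserves (G : Digraph' V E) (s t : V) (h : E → ℕ) : Prop :=
  ∀ v : V, v ≠ s → v ≠ t →
    ∑ e ∈ univ.filter (fun e => G.tgt e = v), h e =
      ∑ e ∈ univ.filter (fun e => G.src e = v), h e

/-- The value of `h`: the net flow out of `s`. -/
def flowValue (G : Digraph' V E) (s : V) (h : E → ℕ) : ℤ :=
  (∑ e ∈ univ.filter (fun e => G.src e = s), (h e : ℤ)) -
    ∑ e ∈ univ.filter (fun e => G.tgt e = s), (h e : ℤ)

/-- An `(s,t)`-flow of a unit-capacity digraph: a `{0,1}`-valued function on edges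
satisfying flow conservation at every vertex other than `s` and `t`. -/
def IsFlow (G : Digraph' V E) (s t : V) (f : E → ℕ) : Prop :=
  (∀ e, f e ≤ 1) ∧ G.Conserves s t f

/-- One step along an edge not belonging to `F`. -/
def stepAvoid (G : Digraph' V E) (F : Finset E) (u v : V) : Prop :=
  ∃ e, e ∉ F ∧ G.src e = u ∧ G.tgt e = v

/-- Reachability by a directed path using no edge of `F`. -/
def ReachAvoid (G : Digraph' V E) (F : Finset E) : V → V → Prop :=
  Relation.ReflTransGen (G.stepAvoid F)

/-- `C` is an `(s,t)`-cut: after deleting the edges of `C` there is no directed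
path from `s` to `t`. -/
def IsCut (G : Digraph' V E) (s t : V) (C : Finset E) : Prop :=
  ¬ G.ReachAvoid C s t

/-- An `(s,t)`-min-cut: an `(s,t)`-cut of minimum cardinality. -/
def IsMinCut (G : Digraph' V E) (s t : V) (C : Finset E) : Prop :=
  G.IsCut s t C ∧ ∀ C' : Finset E, G.IsCut s t C' → C.card ≤ C'.card

/-- A minimal `(s,t)`-cut: no proper subset of it is an `(s,t)`-cut. -/
def IsMinimalCut (G : Digraph' V E) (s t : V) (C : Finset E) : Prop :=
  G.IsCut s t C ∧ ∀ C' : Finset E, C' ⊂ C → ¬ G.IsCut s t C'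

/-- An edge is critical if it belongs to some `(s,t)`-min-cut. -/
def Critical (G : Digraph' V E) (s t : V) (e : E) : Prop :=
  ∃ C : Finset E, G.IsMinCut s t C ∧ e ∈ C

/-- `m` is the maximum `(s,t)`-flow value of `G − F`, i.e. the largest value of an
`(s,t)`-flow of `G` vanishing on every edge of `F`. -/
def IsMaxFlowValue (G : Digraph' V E) (s t : V) (F : Finset E) (m : ℤ) : Prop :=
  (∃ f, G.IsFlow s t f ∧ (∀ e ∈ F, f e = 0) ∧ G.flowValue s f = m) ∧
    ∀ f, G.IsFlow s t f → (∀ e ∈ F, f e = 0) → G.flowValue s f ≤ m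

/-- The residual graph `G_f` of a `{0,1}`-flow `f`: each edge with `f e = 1`
is reversed, each edge with `f e = 0` is kept as is. -/
def residual (G : Digraph' V E) (f : E → ℕ) : Digraph' V E where
  src e := if f e = 1 then G.tgt e else G.src e
  tgt e := if f e = 1 then G.src e else G.tgt e

end Digraph'

/-!
Give every critical edge capacity `λ + 1` and every other edge capacity `λ`. Every `(s,t)`-cut then
has capacity at least `(λ + 1) λ`: a cut with `λ` edges is a min-cut, so all its edges are critical,
and any other cut has at least `λ + 1` edges. By max-flow/min-cut there is therefore an integral
flow `F` within these capacities of value `(λ + 1) λ`. A flow bounded by `k` of value `k w` splits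
into `k` unit flows of value `w`: peel off a unit flow of value `w` that saturates every edge with
`F e = k`, which exists by Hoffman's theorem for the bounds `[F e = k] ≤ f e ≤ min (F e) 1`.
A non-critical edge carries `F e ≤ λ`, so one of the `λ + 1` unit flows avoids it.
-/

theorem Relation.ReflTransGen.exists_nodup_isChain {α : Type*} {r : α → α → Prop} {a b : α}
    (h : Relation.ReflTransGen r a b) :
    ∃ l : List α, l.IsChain r ∧ l.Nodup ∧ l.head? = some a ∧ l.getLast? = some b := by
  classical
  induction h with
  | refl => exact ⟨[a], by simp, by simp, rfl, rfl⟩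
  | @tail x y _ hxy ih =>
    obtain ⟨l, hchain, hnodup, hhead, hlast⟩ := ih
    by_cases hy : y ∈ l
    · obtain ⟨p, q, rfl⟩ := List.append_of_mem hy
      refine ⟨p ++ [y], hchain.prefix ⟨q, by simp⟩, hnodup.sublist (by simp), ?_, by simp⟩
      cases p <;> simp_all
    · refine ⟨l ++ [y], hchain.append (by simp) (by simpa [hlast]), ?_, ?_, by simp⟩
      · simpa [List.nodup_append, hnodup] using fun z hz (hzy : z = y) => hy (hzy ▸ hz)
      · cases l <;> simp_all

theorem Finset.sum_smul_single_sub_single {ι : Type*} [DecidableEq ι] (m : ℤ) (a b : ι)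
    (s : Finset ι) :
    ∑ i ∈ s, (m • (Pi.single a 1 - Pi.single b 1 : ι → ℤ)) i =
      m * ((if a ∈ s then 1 else 0) - if b ∈ s then 1 else 0) := by
  simp only [Pi.smul_apply, smul_eq_mul, Pi.sub_apply, ← Finset.mul_sum, Finset.sum_sub_distrib,
    Finset.sum_pi_single']

namespace Digraph'

section NetOut

variable {V E : Type} [DecidableEq V] [Fintype E] (G : Digraph' V E)

def netOut (f : E → ℕ) (v : V) : ℤ :=
  ∑ e ∈ univ.filter (fun e => G.src e = v), (f e : ℤ) -
    ∑ e ∈ univ.filter (fun e => G.tgt e = v), (f e : ℤ)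

def outEdges (S : Finset V) : Finset E := univ.filter fun e => G.src e ∈ S ∧ G.tgt e ∉ S

def inEdges (S : Finset V) : Finset E := univ.filter fun e => G.src e ∉ S ∧ G.tgt e ∈ S

theorem flowValue_eq_netOut (s : V) (f : E → ℕ) : G.flowValue s f = G.netOut f s := rfl

theorem netOut_add (f g : E → ℕ) : G.netOut (f + g) = G.netOut f + G.netOut g := by
  ext v
  simp only [netOut, Pi.add_apply, Nat.cast_add, Finset.sum_add_distrib]
  ring

theorem netOut_sub {f g : E → ℕ} (h : g ≤ f) : G.netOut (f - g) = G.netOut f - G.netOut g := by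
  rw [eq_sub_iff_add_eq, ← netOut_add, tsub_add_cancel_of_le h]

theorem netOut_single [DecidableEq E] (e : E) :
    G.netOut (Pi.single e 1) = Pi.single (G.src e) 1 - Pi.single (G.tgt e) 1 := by
  ext v
  simp [netOut, Pi.single_apply, eq_comm]

theorem sum_netOut (f : E → ℕ) (S : Finset V) :
    ∑ v ∈ S, G.netOut f v =
      ∑ e ∈ G.outEdges S, (f e : ℤ) - ∑ e ∈ G.inEdges S, (f e : ℤ) := by
  simp only [netOut]
  rw [Finset.sum_sub_distrib, Finset.sum_fiberwise_eq_sum_filter,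
    Finset.sum_fiberwise_eq_sum_filter]
  simp only [outEdges, inEdges, Finset.sum_filter, ← Finset.sum_sub_distrib]
  refine Finset.sum_congr rfl fun e _ => ?_
  split_ifs <;> simp_all

theorem sum_univ_netOut [Fintype V] (f : E → ℕ) : ∑ v, G.netOut f v = 0 := by
  simp [sum_netOut, outEdges, inEdges]

theorem conserves_iff {s t : V} {f : E → ℕ} :
    G.Conserves s t f ↔ ∀ v, v ≠ s → v ≠ t → G.netOut f v = 0 := by
  unfold Conserves netOut
  refine forall_congr' fun v => forall₂_congr fun _ _ => ?_
  rw [sub_eq_zero, eq_comm]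
  exact_mod_cast Iff.rfl

theorem netOut_eq_smul_iff [Fintype V] {s t : V} (hst : s ≠ t) (f : E → ℕ) (m : ℤ) :
    G.netOut f = m • (Pi.single s 1 - Pi.single t 1) ↔
      G.Conserves s t f ∧ G.flowValue s f = m := by
  rw [conserves_iff, flowValue_eq_netOut]
  constructor
  · intro h
    refine ⟨fun v hs ht => ?_, ?_⟩ <;> simp [*]
  · rintro ⟨hcons, hval⟩
    set g := G.netOut f - m • (Pi.single s 1 - Pi.single t 1)
    have hg : ∀ v ≠ t, g v = 0 := fun v ht => by
      by_cases hs : v = s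
      · subst hs; simp [g, hval, ht]
      · simp [g, hcons v hs ht, hs, ht]
    have hsum : ∑ v, g v = 0 := by
      simp [g, Finset.sum_sub_distrib, sum_univ_netOut, ← Finset.mul_sum]
    rw [Finset.sum_eq_single t (fun v _ => hg v) (by simp)] at hsum
    rw [← sub_eq_zero]
    ext v
    by_cases ht : v = t
    · subst ht; exact hsum
    · exact hg v ht

end NetOut

section Cuts

variable {V E : Type} [DecidableEq V] [Fintype E] (G : Digraph' V E)

theorem isCut_outEdges {s t : V} {S : Finset V} (hs : s ∈ S) (ht : t ∉ S) :
    G.IsCut s t (G.outEdges S) := by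
  suffices ∀ v, G.ReachAvoid (G.outEdges S) s v → v ∈ S from fun h => ht (this t h)
  intro v hv
  induction hv with
  | refl => exact hs
  | tail _ hstep ih =>
    obtain ⟨e, he, rfl, rfl⟩ := hstep
    by_contra hv
    exact he (by simp [outEdges, ih, hv])

theorem flowValue_le_card_outEdges [Fintype V] {s t : V} (hst : s ≠ t) {f : E → ℕ}
    (hf : G.IsFlow s t f) {S : Finset V} (hs : s ∈ S) (ht : t ∉ S) :
    G.flowValue s f ≤ (G.outEdges S).card := by
  have hnet := (G.netOut_eq_smul_iff hst f _).2 ⟨hf.2, rfl⟩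
  calc G.flowValue s f
      = ∑ e ∈ G.outEdges S, (f e : ℤ) - ∑ e ∈ G.inEdges S, (f e : ℤ) := by
        rw [← sum_netOut, hnet, Finset.sum_smul_single_sub_single]
        simp [hs, ht]
    _ ≤ ∑ e ∈ G.outEdges S, (1 : ℤ) := by
        have : 0 ≤ ∑ e ∈ G.inEdges S, (f e : ℤ) := by positivity
        have : ∑ e ∈ G.outEdges S, (f e : ℤ) ≤ ∑ e ∈ G.outEdges S, (1 : ℤ) :=
          Finset.sum_le_sum fun e _ => by exact_mod_cast hf.1 e
        linarith
    _ = (G.outEdges S).card := by simp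

theorem flowValue_le_card_of_isCut [Fintype V] {s t : V} (hst : s ≠ t) {f : E → ℕ}
    (hf : G.IsFlow s t f) {C : Finset E} (hC : G.IsCut s t C) : G.flowValue s f ≤ C.card := by
  classical
  set S := univ.filter (G.ReachAvoid C s)
  have hs : s ∈ S := Finset.mem_filter.2 ⟨Finset.mem_univ _, Relation.ReflTransGen.refl⟩
  have ht : t ∉ S := fun h => hC (Finset.mem_filter.1 h).2
  have hsub : G.outEdges S ⊆ C := fun e he => by
    simp only [outEdges, S, Finset.mem_filter, Finset.mem_univ, true_and] at he
    by_contra heC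
    exact he.2 (he.1.tail ⟨e, heC, rfl, rfl⟩)
  calc G.flowValue s f ≤ (G.outEdges S).card := G.flowValue_le_card_outEdges hst hf hs ht
    _ ≤ C.card := by exact_mod_cast Finset.card_le_card hsub

theorem succ_mul_le_sum_outEdges [Fintype V] {s t : V} (hst : s ≠ t) {lam : ℕ} {f : E → ℕ}
    (hf : G.IsFlow s t f) (hval : G.flowValue s f = lam) {c : E → ℕ} (hc : ∀ e, lam ≤ c e)
    (hcrit : ∀ e, G.Critical s t e → lam + 1 ≤ c e) {S : Finset V} (hs : s ∈ S) (ht : t ∉ S) :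
    (lam + 1) * lam ≤ ∑ e ∈ G.outEdges S, c e := by
  have hlam : ∀ C, G.IsCut s t C → lam ≤ C.card := fun C hC => by
    have := G.flowValue_le_card_of_isCut hst hf hC
    omega
  have hcutS := G.isCut_outEdges hs ht
  rcases (hlam _ hcutS).eq_or_lt with hcard | hcard
  · have hmin : G.IsMinCut s t (G.outEdges S) := ⟨hcutS, fun C hC => hcard ▸ hlam C hC⟩
    calc (lam + 1) * lam = (G.outEdges S).card • (lam + 1) := by
          rw [← hcard, smul_eq_mul, mul_comm]
      _ ≤ ∑ e ∈ G.outEdges S, c e :=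
          Finset.card_nsmul_le_sum _ _ _ fun e he => hcrit e ⟨_, hmin, he⟩
  · calc (lam + 1) * lam ≤ (G.outEdges S).card • lam := Nat.mul_le_mul_right _ hcard
      _ ≤ ∑ e ∈ G.outEdges S, c e := Finset.card_nsmul_le_sum _ _ _ fun e _ => hc e

end Cuts


section Residual

variable {V E : Type} (G : Digraph' V E)

def ResStep (lo hi f : E → ℕ) (u v : V) : Prop :=
  ∃ e, (G.src e = u ∧ G.tgt e = v ∧ f e < hi e) ∨ (G.tgt e = u ∧ G.src e = v ∧ lo e < f e)

variable {lo hi f : E → ℕ}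

theorem ResStep.of_agree {G : Digraph' V E} {f' : E → ℕ} {a x y : V}
    (h : G.ResStep lo hi f x y) (hagree : ∀ e, G.src e ≠ a → G.tgt e ≠ a → f' e = f e)
    (hx : x ≠ a) (hy : y ≠ a) : G.ResStep lo hi f' x y := by
  obtain ⟨e, ⟨rfl, rfl, hlt⟩ | ⟨rfl, rfl, hlt⟩⟩ := h
  · exact ⟨e, Or.inl ⟨rfl, rfl, hagree e hx hy ▸ hlt⟩⟩
  · exact ⟨e, Or.inr ⟨rfl, rfl, hagree e hy hx ▸ hlt⟩⟩

variable [DecidableEq V] [Fintype E] [DecidableEq E]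

theorem ResStep.exists_push {G : Digraph' V E} {a c : V} (h : G.ResStep lo hi f a c)
    (hlo : lo ≤ f) (hhi : f ≤ hi) :
    ∃ f', lo ≤ f' ∧ f' ≤ hi ∧ (∀ e, G.src e ≠ a → G.tgt e ≠ a → f' e = f e) ∧
      G.netOut f' = G.netOut f + Pi.single a 1 - Pi.single c 1 := by
  obtain ⟨e, ⟨rfl, rfl, hlt⟩ | ⟨rfl, rfl, hlt⟩⟩ := h
  · refine ⟨f + Pi.single e 1, fun x => ?_, fun x => ?_, fun x hx _ => ?_, ?_⟩
    · exact (hlo x).trans (Nat.le_add_right _ _)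
    · rcases eq_or_ne x e with rfl | hxe
      · simpa using hlt
      · simpa [hxe] using hhi x
    · simp [show x ≠ e by rintro rfl; exact hx rfl]
    · rw [netOut_add, netOut_single]
      abel
  · refine ⟨f - Pi.single e 1, fun x => ?_, fun x => ?_, fun x _ hx => ?_, ?_⟩
    · rcases eq_or_ne x e with rfl | hxe
      · simpa using Nat.le_sub_one_of_lt hlt
      · simpa [hxe] using hlo x
    · exact (Nat.sub_le _ _).trans (hhi x)
    · simp [show x ≠ e by rintro rfl; exact hx rfl]
    · have hle : (Pi.single e 1 : E → ℕ) ≤ f := fun x => by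
        rcases eq_or_ne x e with rfl | hxe
        · simpa using Nat.one_le_of_lt hlt
        · simp [hxe]
      rw [netOut_sub _ hle, netOut_single]
      abel

theorem exists_augment_of_isChain (l : List V) {a b : V} (hlo : lo ≤ f) (hhi : f ≤ hi)
    (hchain : l.IsChain (G.ResStep lo hi f)) (hnodup : l.Nodup) (hhead : l.head? = some a)
    (hlast : l.getLast? = some b) :
    ∃ f', lo ≤ f' ∧ f' ≤ hi ∧ G.netOut f' = G.netOut f + Pi.single a 1 - Pi.single b 1 := by
  induction l generalizing a f with
  | nil => simp at hhead
  | cons a' l ih =>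
    obtain rfl : a' = a := by simpa using hhead
    cases l with
    | nil =>
      obtain rfl : a' = b := by simpa using hlast
      exact ⟨f, hlo, hhi, by simp⟩
    | cons c l =>
      rw [List.isChain_cons_cons] at hchain
      -- The push changes `f` only on edges at `a`, which the rest of the simple path avoids.
      obtain ⟨f₁, hlo₁, hhi₁, hagree, hnet₁⟩ := hchain.1.exists_push hlo hhi
      have ha : a' ∉ c :: l := (List.nodup_cons.1 hnodup).1
      have hchain₁ : (c :: l).IsChain (G.ResStep lo hi f₁) :=
        hchain.2.imp_of_mem_imp fun x y hx hy hxy =>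
          hxy.of_agree hagree (ne_of_mem_of_not_mem hx ha) (ne_of_mem_of_not_mem hy ha)
      obtain ⟨f', hlo', hhi', hnet'⟩ :=
        ih hlo₁ hhi₁ hchain₁ hnodup.of_cons rfl (by simpa using hlast)
      exact ⟨f', hlo', hhi', by rw [hnet', hnet₁]; abel⟩

theorem exists_augment {a b : V} (h : Relation.ReflTransGen (G.ResStep lo hi f) a b)
    (hlo : lo ≤ f) (hhi : f ≤ hi) :
    ∃ f', lo ≤ f' ∧ f' ≤ hi ∧ G.netOut f' = G.netOut f + Pi.single a 1 - Pi.single b 1 :=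
  let ⟨l, hchain, hnodup, hhead, hlast⟩ := h.exists_nodup_isChain
  G.exists_augment_of_isChain l hlo hhi hchain hnodup hhead hlast

end Residual

section Feasibility

variable {V E : Type} [DecidableEq V] [Fintype E] (G : Digraph' V E) {lo hi f : E → ℕ}

theorem sum_netOut_of_closed {S : Finset V} (hS : ∀ x ∈ S, ∀ y, G.ResStep lo hi f x y → y ∈ S)
    (hlo : lo ≤ f) (hhi : f ≤ hi) :
    ∑ v ∈ S, G.netOut f v = ∑ e ∈ G.outEdges S, (hi e : ℤ) - ∑ e ∈ G.inEdges S, (lo e : ℤ) := by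
  rw [sum_netOut]
  congr 1 <;> refine Finset.sum_congr rfl fun e he => ?_ <;>
    simp only [outEdges, inEdges, Finset.mem_filter, Finset.mem_univ, true_and] at he
  · have : ¬ f e < hi e := fun hlt => he.2 (hS _ he.1 _ ⟨e, Or.inl ⟨rfl, rfl, hlt⟩⟩)
    exact_mod_cast le_antisymm (hhi e) (not_lt.1 this)
  · have : ¬ lo e < f e := fun hlt => he.1 (hS _ he.2 _ ⟨e, Or.inr ⟨rfl, rfl, hlt⟩⟩)
    exact_mod_cast le_antisymm (not_lt.1 this) (hlo e)

/-- Hoffman's theorem. A feasible `f` of minimal total defect `∑ v, |netOut f v - d v|` has none: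
otherwise the cut condition, applied to the vertices residually reachable from a vertex with
a deficit, yields a reachable vertex with a surplus, and augmenting along a path between them
lowers the defect. -/
theorem exists_netOut_eq [Fintype V] [DecidableEq E] (hle : lo ≤ hi) (d : V → ℤ)
    (hd : ∑ v, d v = 0)
    (hcut : ∀ S : Finset V,
      ∑ v ∈ S, d v ≤ ∑ e ∈ G.outEdges S, (hi e : ℤ) - ∑ e ∈ G.inEdges S, (lo e : ℤ)) :
    ∃ f, lo ≤ f ∧ f ≤ hi ∧ G.netOut f = d := by
  classical
  let defect (f : E → ℕ) : ℕ := ∑ v, (G.netOut f v - d v).natAbs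
  obtain ⟨f, ⟨hlo, hhi⟩, hmin⟩ :=
    (InvImage.wf defect wellFounded_lt).has_min {f | lo ≤ f ∧ f ≤ hi} ⟨lo, le_rfl, hle⟩
  refine ⟨f, hlo, hhi, ?_⟩
  by_contra hne
  obtain ⟨a, ha⟩ : ∃ a, G.netOut f a < d a := by
    by_contra! h
    refine hne (funext fun v => ?_)
    exact ((Finset.sum_eq_sum_iff_of_le fun v _ => h v).1 (by rw [hd, sum_univ_netOut]) v
      (Finset.mem_univ v)).symm
  set S := univ.filter (Relation.ReflTransGen (G.ResStep lo hi f) a)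
  have haS : a ∈ S := Finset.mem_filter.2 ⟨Finset.mem_univ _, Relation.ReflTransGen.refl⟩
  obtain ⟨b, hbS, hb⟩ : ∃ b ∈ S, d b < G.netOut f b := by
    by_contra! h
    have hclosed : ∀ x ∈ S, ∀ y, G.ResStep lo hi f x y → y ∈ S := fun x hx y hxy =>
      Finset.mem_filter.2 ⟨Finset.mem_univ _, (Finset.mem_filter.1 hx).2.tail hxy⟩
    have := Finset.sum_lt_sum h ⟨a, haS, ha⟩
    rw [G.sum_netOut_of_closed hclosed hlo hhi] at this
    exact (hcut S).not_gt this
  obtain ⟨g, hglo, hghi, hg⟩ := G.exists_augment (Finset.mem_filter.1 hbS).2 hlo hhi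
  refine hmin g ⟨hglo, hghi⟩
    (show defect g < defect f from Finset.sum_lt_sum (fun v _ => ?_) ⟨a, Finset.mem_univ _, ?_⟩)
  all_goals
    simp only [hg, Pi.add_apply, Pi.sub_apply, Pi.single_apply]
    split_ifs <;> subst_vars <;> omega

end Feasibility

section Decomposition

variable {V E : Type} [Fintype V] [DecidableEq V] [Fintype E] [DecidableEq E] (G : Digraph' V E)
  {s t : V}

theorem exists_flow_of_le_sum_outEdges {c : E → ℕ} {m : ℕ}
    (hcut : ∀ S : Finset V, s ∈ S → t ∉ S → m ≤ ∑ e ∈ G.outEdges S, c e) :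
    ∃ F ≤ c, G.netOut F = (m : ℤ) • (Pi.single s 1 - Pi.single t 1) := by
  have hcond (S : Finset V) : ∑ v ∈ S, ((m : ℤ) • (Pi.single s 1 - Pi.single t 1 : V → ℤ)) v ≤
      ∑ e ∈ G.outEdges S, (c e : ℤ) - ∑ e ∈ G.inEdges S, ((0 : E → ℕ) e : ℤ) := by
    rw [Finset.sum_smul_single_sub_single]
    simp only [Pi.zero_apply, Nat.cast_zero, Finset.sum_const_zero, sub_zero]
    have hsum : (0 : ℤ) ≤ ∑ e ∈ G.outEdges S, (c e : ℤ) := by positivity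
    split_ifs with hs ht ht
    · linarith
    · rw [sub_zero, mul_one]
      exact_mod_cast hcut S hs ht
    · linarith
    · linarith
  obtain ⟨F, -, hFc, hF⟩ := G.exists_netOut_eq (fun e => Nat.zero_le (c e)) _
    (by rw [Finset.sum_smul_single_sub_single]; simp) hcond
  exact ⟨F, hFc, hF⟩

theorem exists_unit_flow_saturating {k w : ℕ} (hk : 0 < k) {F : E → ℕ} (hFk : ∀ e, F e ≤ k)
    (hF : G.netOut F = ((k : ℤ) * w) • (Pi.single s 1 - Pi.single t 1)) :
    ∃ f ≤ F, (∀ e, f e ≤ 1) ∧ (∀ e, F e = k → f e = 1) ∧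
      G.netOut f = (w : ℤ) • (Pi.single s 1 - Pi.single t 1) := by
  set lo : E → ℕ := fun e => if F e = k then 1 else 0
  set hi : E → ℕ := fun e => min (F e) 1
  -- As `k • lo ≤ F ≤ k • hi`, the cut condition is the cut identity of `F` divided by `k`.
  have hcut (S : Finset V) : ∑ v ∈ S, ((w : ℤ) • (Pi.single s 1 - Pi.single t 1 : V → ℤ)) v ≤
      ∑ e ∈ G.outEdges S, (hi e : ℤ) - ∑ e ∈ G.inEdges S, (lo e : ℤ) := by
    have hcross := G.sum_netOut F S
    rw [hF, Finset.sum_smul_single_sub_single] at hcross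
    rw [Finset.sum_smul_single_sub_single,
      ← mul_le_mul_iff_of_pos_left (show (0 : ℤ) < k by exact_mod_cast hk), ← mul_assoc, hcross, mul_sub, Finset.mul_sum, Finset.mul_sum]
    gcongr with e _ e _
    · have := hFk e
      rcases Nat.eq_zero_or_pos (F e) with h | h
      · simp only [h, Nat.cast_zero]
        positivity
      · simp only [hi, min_eq_right (show 1 ≤ F e from h), Nat.cast_one, mul_one]
        exact_mod_cast this
    · have := hFk e
      simp only [lo]
      split_ifs <;> simp [*]
  obtain ⟨f, hlo, hhi, hf⟩ :=
    G.exists_netOut_eq (fun e => by simp only [lo, hi]; split_ifs <;> omega) _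
      (by rw [Finset.sum_smul_single_sub_single]; simp) hcut
  refine ⟨f, fun e => (hhi e).trans (min_le_left _ _), fun e => (hhi e).trans (min_le_right _ _),
    fun e he => le_antisymm ((hhi e).trans (min_le_right _ _)) ?_, hf⟩
  simpa [lo, he] using hlo e

theorem exists_unitFlows_sum_eq (w : ℕ) :
    ∀ (k : ℕ) (F : E → ℕ), (∀ e, F e ≤ k) →
      G.netOut F = ((k : ℤ) * w) • (Pi.single s 1 - Pi.single t 1) →
      ∃ A : Fin k → E → ℕ,
        (∀ i, (∀ e, A i e ≤ 1) ∧ G.netOut (A i) = (w : ℤ) • (Pi.single s 1 - Pi.single t 1)) ∧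
        ∀ e, ∑ i, A i e = F e
  | 0, F, hF0, _ =>
    ⟨Fin.elim0, fun i => i.elim0, fun e => by simpa using (Nat.le_zero.1 (hF0 e)).symm⟩
  | k + 1, F, hFk, hF => by
    obtain ⟨f, hfF, hf1, hfsat, hf⟩ := G.exists_unit_flow_saturating k.succ_pos hFk hF
    obtain ⟨A, hA, hsum⟩ := exists_unitFlows_sum_eq w k (F - f) (fun e => by
        have := hFk e
        have := hfsat e
        simp only [Pi.sub_apply]
        omega) (by
        rw [netOut_sub _ hfF, hF, hf, ← sub_smul]
        push_cast
        ring_nf)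
    refine ⟨Fin.cons f A, Fin.cases ⟨hf1, hf⟩ hA, fun e => ?_⟩
    rw [Fin.sum_univ_succ, Fin.cons_zero]
    simp only [Fin.cons_succ, hsum, Pi.sub_apply]
    have : f e ≤ F e := hfF e
    omega

end Decomposition

end Digraph'

/-- If `λ` is the value of a maximum `(s,t)`-flow of `G`, then there
exists a family `A = {f_1, …, f_{λ+1}}` of `λ+1` maximum `(s,t)`-flows of `G` such that
for every non-critical edge `e` there is an index `i` with `f_i e = 0`. -/
theorem stmt0 {V E : Type} [Fintype V] [DecidableEq V] [Fintype E] [DecidableEq E]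
    (G : Digraph' V E) (s t : V) (hst : s ≠ t) (lam : ℕ)
    (hmax : G.IsMaxFlowValue s t ∅ lam) :
    ∃ A : Fin (lam + 1) → E → ℕ,
      (∀ i, G.IsFlow s t (A i) ∧ G.flowValue s (A i) = lam) ∧
      ∀ e : E, ¬ G.Critical s t e → ∃ i, A i e = 0 := by
  classical
  obtain ⟨⟨f₀, hf₀, -, hval₀⟩, -⟩ := hmax
  let c : E → ℕ := fun e => if G.Critical s t e then lam + 1 else lam
  have hc : ∀ e, lam ≤ c e ∧ c e ≤ lam + 1 := fun e => by simp only [c]; split_ifs <;> omega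
  obtain ⟨F, hFc, hF⟩ := G.exists_flow_of_le_sum_outEdges fun S hs ht =>
    G.succ_mul_le_sum_outEdges hst hf₀ hval₀ (fun e => (hc e).1) (fun e he => by simp [c, he]) hs ht
  obtain ⟨A, hA, hsum⟩ := G.exists_unitFlows_sum_eq lam (lam + 1) F
    (fun e => (hFc e).trans (hc e).2) (by rw [hF]; push_cast; rfl)
  refine ⟨A, fun i => ?_, fun e he => ?_⟩
  · obtain ⟨hcons, hval⟩ := (G.netOut_eq_smul_iff hst _ _).1 (hA i).2
    exact ⟨⟨(hA i).1, hcons⟩, hval⟩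
  · have hlt : ∑ i, A i e < ∑ _i : Fin (lam + 1), 1 := by
      simpa [hsum, c, he] using Nat.lt_succ_of_le (hFc e)
    obtain ⟨i, -, hi⟩ := Finset.exists_lt_of_sum_lt hlt
    exact ⟨i, Nat.lt_one_iff.1 hi⟩
end

section
/- For every even integer n ≥ 6 there exists an n-vertex directed graph G with source s, sink t, and maximum (s,t)-flow value equal to 1, such that every family B of (s,t)-flows of G with the following covering property has cardinality at least n/2 − 2: for every set F of at most two edges of G, B contains a flow f with f(e) = 0 for all e ∈ F whose value equals the maximum (s,t)-flow value of G − F. -/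
open Finset

-- construction
abbrev Ek (k : ℕ) : Type := Fin k ⊕ Fin k ⊕ Fin k

def srck (k : ℕ) : Ek k → Fin (2*k+2)
  | .inl i => ⟨i.1, by have := i.2; omega⟩
  | .inr (.inl i) => ⟨i.1+1, by have := i.2; omega⟩
  | .inr (.inr i) => ⟨k+1+i.1, by have := i.2; omega⟩

def tgtk (k : ℕ) : Ek k → Fin (2*k+2)
  | .inl i => ⟨i.1+1, by have := i.2; omega⟩
  | .inr (.inl i) => ⟨k+1+i.1, by have := i.2; omega⟩
  | .inr (.inr i) => ⟨k+2+i.1, by have := i.2; omega⟩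

def Gk (k : ℕ) : Digraph' (Fin (2*k+2)) (Ek k) := ⟨srck k, tgtk k⟩

def sk (k : ℕ) : Fin (2*k+2) := ⟨0, by omega⟩
def tk (k : ℕ) : Fin (2*k+2) := ⟨2*k+1, by omega⟩

-- accessors
def aT (k : ℕ) (g : Ek k → ℕ) (m : ℕ) : ℕ := if h : m < k then g (.inl ⟨m, h⟩) else 0
def aR (k : ℕ) (g : Ek k → ℕ) (m : ℕ) : ℕ := if h : m < k then g (.inr (.inl ⟨m, h⟩)) else 0
def aB (k : ℕ) (g : Ek k → ℕ) (m : ℕ) : ℕ := if h : m < k then g (.inr (.inr ⟨m, h⟩)) else 0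

lemma aT_zero (k g m) (h : k ≤ m) : aT k g m = 0 := dif_neg (by omega)
lemma aR_zero (k g m) (h : k ≤ m) : aR k g m = 0 := dif_neg (by omega)
lemma aB_zero (k g m) (h : k ≤ m) : aB k g m = 0 := dif_neg (by omega)

lemma sum_shift (k c m : ℕ) (g : ℕ → ℕ) (hg : ∀ i, k ≤ i → g i = 0) :
    ∑ i ∈ Finset.range k, (if i + c = m then g i else 0) = if c ≤ m then g (m - c) else 0 := by
  by_cases h : c ≤ m ∧ m - c < k
  · rw [if_pos h.1]
    rw [Finset.sum_eq_single_of_mem (m - c) (Finset.mem_range.2 h.2)]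
    · rw [if_pos (by omega)]
    · intro i _ hi
      rw [if_neg (by omega)]
  · rw [Finset.sum_eq_zero]
    · split_ifs with h2
      · exact (hg _ (by omega)).symm
      · rfl
    · intro i hi
      rw [if_neg]
      intro hc
      exact h ⟨by omega, by have := Finset.mem_range.1 hi; omega⟩


lemma fin_sum_shift (k c m : ℕ) (g : ℕ → ℕ) (hg : ∀ i, k ≤ i → g i = 0) :
    ∑ i : Fin k, (if (i : ℕ) + c = m then g i else 0) = if c ≤ m then g (m - c) else 0 :=
  (Fin.sum_univ_eq_sum_range (fun i => if i + c = m then g i else 0) k).trans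
    (sum_shift k c m g hg)

lemma sum_tgt (k : ℕ) (g : Ek k → ℕ) (v : Fin (2*k+2)) :
    ∑ e ∈ univ.filter (fun e => (Gk k).tgt e = v), g e
      = (if 1 ≤ v.1 then aT k g (v.1 - 1) else 0)
      + ((if k+1 ≤ v.1 then aR k g (v.1 - (k+1)) else 0)
      + (if k+2 ≤ v.1 then aB k g (v.1 - (k+2)) else 0)) := by
  rw [Finset.sum_filter, Fintype.sum_sum_type, Fintype.sum_sum_type]
  congr 1
  · refine Eq.trans (Finset.sum_congr rfl fun i _ => ?_)
      (fin_sum_shift k (1) v.1 (aT k g) (fun i hi => aT_zero k g i hi))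
    have hc : ((Gk k).tgt (.inl i) = v) ↔ ((i : ℕ) + (1) = v.1) := by
      rw [Fin.ext_iff]; simp only [Gk, tgtk]; try omega
    have hv : g (.inl i) = aT k g i.1 := by rw [aT, dif_pos i.2, Fin.eta]
    rw [hv]; exact if_congr hc rfl rfl
  congr 1
  · refine Eq.trans (Finset.sum_congr rfl fun i _ => ?_)
      (fin_sum_shift k (k+1) v.1 (aR k g) (fun i hi => aR_zero k g i hi))
    have hc : ((Gk k).tgt (.inr (.inl i)) = v) ↔ ((i : ℕ) + (k+1) = v.1) := by
      rw [Fin.ext_iff]; simp only [Gk, tgtk]; try omega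
    have hv : g (.inr (.inl i)) = aR k g i.1 := by rw [aR, dif_pos i.2, Fin.eta]
    rw [hv]; exact if_congr hc rfl rfl
  · refine Eq.trans (Finset.sum_congr rfl fun i _ => ?_)
      (fin_sum_shift k (k+2) v.1 (aB k g) (fun i hi => aB_zero k g i hi))
    have hc : ((Gk k).tgt (.inr (.inr i)) = v) ↔ ((i : ℕ) + (k+2) = v.1) := by
      rw [Fin.ext_iff]; simp only [Gk, tgtk]; try omega
    have hv : g (.inr (.inr i)) = aB k g i.1 := by rw [aB, dif_pos i.2, Fin.eta]
    rw [hv]; exact if_congr hc rfl rfl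

lemma sum_src (k : ℕ) (g : Ek k → ℕ) (v : Fin (2*k+2)) :
    ∑ e ∈ univ.filter (fun e => (Gk k).src e = v), g e
      = (if 0 ≤ v.1 then aT k g (v.1 - 0) else 0)
      + ((if 1 ≤ v.1 then aR k g (v.1 - 1) else 0)
      + (if k+1 ≤ v.1 then aB k g (v.1 - (k+1)) else 0)) := by
  rw [Finset.sum_filter, Fintype.sum_sum_type, Fintype.sum_sum_type]
  congr 1
  · refine Eq.trans (Finset.sum_congr rfl fun i _ => ?_)
      (fin_sum_shift k (0) v.1 (aT k g) (fun i hi => aT_zero k g i hi))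
    have hc : ((Gk k).src (.inl i) = v) ↔ ((i : ℕ) + (0) = v.1) := by
      rw [Fin.ext_iff]; simp only [Gk, srck]; try omega
    have hv : g (.inl i) = aT k g i.1 := by rw [aT, dif_pos i.2, Fin.eta]
    rw [hv]; exact if_congr hc rfl rfl
  congr 1
  · refine Eq.trans (Finset.sum_congr rfl fun i _ => ?_)
      (fin_sum_shift k (1) v.1 (aR k g) (fun i hi => aR_zero k g i hi))
    have hc : ((Gk k).src (.inr (.inl i)) = v) ↔ ((i : ℕ) + (1) = v.1) := by
      rw [Fin.ext_iff]; simp only [Gk, srck]; try omega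
    have hv : g (.inr (.inl i)) = aR k g i.1 := by rw [aR, dif_pos i.2, Fin.eta]
    rw [hv]; exact if_congr hc rfl rfl
  · refine Eq.trans (Finset.sum_congr rfl fun i _ => ?_)
      (fin_sum_shift k (k+1) v.1 (aB k g) (fun i hi => aB_zero k g i hi))
    have hc : ((Gk k).src (.inr (.inr i)) = v) ↔ ((i : ℕ) + (k+1) = v.1) := by
      rw [Fin.ext_iff]; simp only [Gk, srck]; try omega
    have hv : g (.inr (.inr i)) = aB k g i.1 := by rw [aB, dif_pos i.2, Fin.eta]
    rw [hv]; exact if_congr hc rfl rfl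

def fP (k r : ℕ) : Ek k → ℕ
  | .inl i => if i.1 ≤ r then 1 else 0
  | .inr (.inl i) => if i.1 = r then 1 else 0
  | .inr (.inr i) => if r ≤ i.1 then 1 else 0

lemma aT_fP (k r m : ℕ) : aT k (fP k r) m = if m < k ∧ m ≤ r then 1 else 0 := by
  rw [aT]; split_ifs with h1 h2 h3 <;> simp_all [fP] <;> omega
lemma aR_fP (k r m : ℕ) : aR k (fP k r) m = if m < k ∧ m = r then 1 else 0 := by
  rw [aR]; split_ifs with h1 h2 h3 <;> simp_all [fP] <;> omega
lemma aB_fP (k r m : ℕ) : aB k (fP k r) m = if m < k ∧ r ≤ m then 1 else 0 := by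
  rw [aB]; split_ifs with h1 h2 h3 <;> simp_all [fP] <;> omega

lemma fP_le_one (k r : ℕ) : ∀ e, fP k r e ≤ 1 := by
  rintro (i | i | i) <;> simp only [fP] <;> split_ifs <;> omega

lemma fP_conserves (k r : ℕ) (hr : r < k) : (Gk k).Conserves (sk k) (tk k) (fP k r) := by
  intro v hv0 hvt
  have h0 : v.1 ≠ 0 := fun h => hv0 (Fin.ext h)
  have ht : v.1 ≠ 2*k+1 := fun h => hvt (Fin.ext h)
  have hlt := v.2
  rw [sum_tgt, sum_src]
  simp only [aT_fP, aR_fP, aB_fP]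
  split_ifs <;> omega

lemma fP_isFlow (k r : ℕ) (hr : r < k) : (Gk k).IsFlow (sk k) (tk k) (fP k r) :=
  ⟨fP_le_one k r, fP_conserves k r hr⟩

lemma aT_le_one (k : ℕ) (g : Ek k → ℕ) (hg : ∀ e, g e ≤ 1) (m : ℕ) : aT k g m ≤ 1 := by
  rw [aT]; split_ifs; · exact hg _
  · omega
lemma aR_le_one (k : ℕ) (g : Ek k → ℕ) (hg : ∀ e, g e ≤ 1) (m : ℕ) : aR k g m ≤ 1 := by
  rw [aR]; split_ifs; · exact hg _
  · omega
lemma aB_le_one (k : ℕ) (g : Ek k → ℕ) (hg : ∀ e, g e ≤ 1) (m : ℕ) : aB k g m ≤ 1 := by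
  rw [aB]; split_ifs; · exact hg _
  · omega

lemma conserve_u (k : ℕ) (g : Ek k → ℕ) (hc : (Gk k).Conserves (sk k) (tk k) g)
    (j : ℕ) (h1 : 1 ≤ j) (h2 : j ≤ k) :
    aT k g (j-1) = aT k g j + aR k g (j-1) := by
  have hk : 1 ≤ k := le_trans h1 h2
  have h := hc ⟨j, by omega⟩ (fun h => by simp only [sk, Fin.ext_iff] at h; omega)
    (fun h => by simp only [tk, Fin.ext_iff] at h; omega)
  rw [sum_tgt, sum_src] at h
  simp only [Fin.val_mk] at h
  rw [if_pos h1, if_neg (by omega), if_neg (by omega), if_pos (Nat.zero_le j),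
    if_pos h1, if_neg (by omega), Nat.sub_zero] at h
  omega

lemma conserve_w (k : ℕ) (g : Ek k → ℕ) (hc : (Gk k).Conserves (sk k) (tk k) g)
    (j : ℕ) (h1 : 1 ≤ j) (h2 : j ≤ k) :
    aR k g (j-1) + (if 2 ≤ j then aB k g (j-2) else 0) = aB k g (j-1) := by
  have h := hc ⟨k+j, by omega⟩ (fun h => by simp only [sk, Fin.ext_iff] at h; omega)
    (fun h => by simp only [tk, Fin.ext_iff] at h; omega)
  rw [sum_tgt, sum_src] at h
  simp only [Fin.val_mk] at h
  rw [if_pos (by omega : 1 ≤ k+j), if_pos (by omega : k+1 ≤ k+j),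
    if_pos (by omega : 0 ≤ k+j), if_pos (by omega : 1 ≤ k+j),
    if_pos (by omega : k+1 ≤ k+j), Nat.sub_zero,
    aT_zero k g (k+j-1) (by omega), aT_zero k g (k+j) (by omega),
    aR_zero k g (k+j-1) (by omega),
    show k+j-(k+1) = j-1 by omega, show k+j-(k+2) = j-2 by omega] at h
  rw [show ((if k+2 ≤ k+j then aB k g (j-2) else 0) = if 2 ≤ j then aB k g (j-2) else 0)
    from if_congr (by omega) rfl rfl] at h
  omega

lemma flowValue_eq (k : ℕ) (g : Ek k → ℕ) :
    (Gk k).flowValue (sk k) g = (aT k g 0 : ℤ) := by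
  rw [Digraph'.flowValue, ← Nat.cast_sum, ← Nat.cast_sum, sum_tgt, sum_src]
  simp only [sk, Fin.val_mk]
  norm_num

lemma rung_determined (k r : ℕ) (hr : r < k)
    (T R Bt : ℕ → ℕ)
    (hT1 : ∀ m, T m ≤ 1) (hR1 : ∀ m, R m ≤ 1) (hB1 : ∀ m, Bt m ≤ 1)
    (hu : ∀ j, 1 ≤ j → j ≤ k → T (j-1) = T j + R (j-1))
    (hw : ∀ j, 1 ≤ j → j ≤ k → R (j-1) + (if 2 ≤ j then Bt (j-2) else 0) = Bt (j-1))
    (hT0 : T 0 = 1)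
    (hTr : T (r+1) = 0)
    (hBr : 1 ≤ r → Bt (r-1) = 0) :
    ∀ j < k, R j = if j = r then 1 else 0 := by
  have hBlow : ∀ i, i < r → Bt (r - 1 - i) = 0 := by
    intro i
    induction i with
    | zero => intro h; simpa using hBr (by omega)
    | succ m ih =>
      intro h
      have hm := ih (by omega)
      have h2 := hw (r-m) (by omega) (by omega)
      rw [if_pos (by omega)] at h2
      rw [show r - m - 1 = r - 1 - m from by omega,
        show r - m - 2 = r - 1 - (m+1) from by omega] at h2
      omega
  have hBzero : ∀ i, i < r → Bt i = 0 := by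
    intro i hi
    have := hBlow (r - 1 - i) (by omega)
    rwa [show r - 1 - (r - 1 - i) = i from by omega] at this
  have hRzero : ∀ i, i < r → R i = 0 := by
    intro i hi
    have h2 := hw (i+1) (by omega) (by omega)
    rw [Nat.add_sub_cancel] at h2
    have hb := hBzero i hi
    omega
  have hTone : ∀ j, j ≤ r → T j = 1 := by
    intro j
    induction j with
    | zero => intro _; exact hT0
    | succ m ih =>
      intro hj
      have h2 := hu (m+1) (by omega) (by omega)
      rw [Nat.add_sub_cancel] at h2
      have h3 := ih (by omega)
      have h4 := hRzero m (by omega)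
      have h5 := hT1 (m+1)
      omega
  have hRr : R r = 1 := by
    have h2 := hu (r+1) (by omega) (by omega)
    rw [Nat.add_sub_cancel] at h2
    have h3 := hTone r le_rfl
    have h5 := hR1 r
    omega
  have hBhigh : ∀ j, r ≤ j → j < k → Bt j = 1 ∧ (r < j → R j = 0) := by
    intro j
    induction j with
    | zero =>
      intro h0 hk0
      have hr0 : r = 0 := by omega
      have h2 := hw 1 (by omega) (by omega)
      rw [if_neg (by omega)] at h2
      simp only [Nat.sub_self] at h2
      subst hr0
      refine ⟨by omega, fun h => by omega⟩
    | succ m ih =>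
      intro hrm hmk
      by_cases hm : r ≤ m
      · have hm1 := ih hm (by omega)
        have h2 := hw (m+2) (by omega) (by omega)
        rw [if_pos (by omega), show m+2-1 = m+1 from by omega,
          show m+2-2 = m from by omega] at h2
        have h5 := hR1 (m+1)
        have h6 := hB1 (m+1)
        exact ⟨by omega, fun _ => by omega⟩
      · have hrm1 : r = m+1 := by omega
        have h2 := hw (r+1) (by omega) (by omega)
        rw [Nat.add_sub_cancel, show r+1-2 = r-1 from by omega] at h2
        have hbb : (if 2 ≤ r+1 then Bt (r-1) else 0) = 0 := by
          split_ifs with hc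
          · exact hBr (by omega)
          · rfl
        rw [hbb] at h2
        rw [← hrm1]
        exact ⟨by omega, fun h => by omega⟩
  intro j hj
  rcases lt_trichotomy j r with h | h | h
  · rw [if_neg (by omega)]; exact hRzero j h
  · rw [if_pos h]; rw [h]; exact hRr
  · rw [if_neg (by omega)]; exact (hBhigh j (by omega) hj).2 h

def Fset (k r : ℕ) : Finset (Ek k) :=
  (if h : r + 1 < k then {Sum.inl ⟨r+1, h⟩} else ∅)
  ∪ (if h : r - 1 < k ∧ 1 ≤ r then {Sum.inr (Sum.inr ⟨r-1, h.1⟩)} else ∅)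

lemma Fset_card (k r : ℕ) : (Fset k r).card ≤ 2 :=
  le_trans (Finset.card_union_le _ _) (by split_ifs <;> simp)

lemma mem_top (k r : ℕ) (h : r+1 < k) : Sum.inl ⟨r+1, h⟩ ∈ Fset k r :=
  Finset.mem_union_left _ (by rw [dif_pos h]; exact Finset.mem_singleton_self _)

lemma mem_bot (k r : ℕ) (h1 : r-1 < k) (h2 : 1 ≤ r) :
    Sum.inr (Sum.inr ⟨r-1, h1⟩) ∈ Fset k r :=
  Finset.mem_union_right _
    (by rw [dif_pos (⟨h1, h2⟩ : r - 1 < k ∧ 1 ≤ r)]; exact Finset.mem_singleton_self _)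

lemma fP_vanish (k r : ℕ) : ∀ e ∈ Fset k r, fP k r e = 0 := by
  intro e he
  rcases Finset.mem_union.1 he with h | h
  · split_ifs at h with hc
    · rw [Finset.mem_singleton.1 h]; simp only [fP]; rw [if_neg (by omega)]
    · exact absurd h (Finset.notMem_empty _)
  · split_ifs at h with hc
    · rw [Finset.mem_singleton.1 h]; simp only [fP]; rw [if_neg (by omega)]
    · exact absurd h (Finset.notMem_empty _)


/-- For every even `n ≥ 6` there is an `n`-vertex directed graph `G`
with source `s`, sink `t` and maximum `(s,t)`-flow value `1`, such that every family
`B` of `(s,t)`-flows of `G` with the property that for every set `F` of at most two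
edges, `B` contains a flow vanishing on `F` whose value is the maximum `(s,t)`-flow
value of `G − F`, has cardinality at least `n/2 − 2`. -/
theorem stmt3 (n : ℕ) (hn : 6 ≤ n) (heven : Even n) :
    ∃ (E : Type) (instE : Fintype E) (instE' : DecidableEq E)
      (G : Digraph' (Fin n) E) (s t : Fin n),
      haveI := instE
      haveI := instE'
      s ≠ t ∧
      G.IsMaxFlowValue s t ∅ 1 ∧
      ∀ B : Finset (E → ℕ),
        (∀ f ∈ B, G.IsFlow s t f) →
        (∀ F : Finset E, F.card ≤ 2 →
          ∃ f ∈ B, (∀ e ∈ F, f e = 0) ∧ G.IsMaxFlowValue s t F (G.flowValue s f)) →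
        n / 2 - 2 ≤ B.card := by
  obtain ⟨k, rfl⟩ : ∃ k, n = 2*k+2 := ⟨n/2-1, by obtain ⟨m, hm⟩ := heven; omega⟩
  have hk : 2 ≤ k := by omega
  refine ⟨Ek k, inferInstance, inferInstance, Gk k, sk k, tk k, ?_, ?_, ?_⟩
  · intro h
    simp only [sk, tk, Fin.ext_iff] at h
    omega
  · constructor
    · refine ⟨fP k 0, fP_isFlow k 0 (by omega), by simp, ?_⟩
      rw [flowValue_eq, aT_fP, if_pos ⟨by omega, le_rfl⟩]
      norm_num
    · intro f hf _
      rw [flowValue_eq]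
      have := aT_le_one k f hf.1 0
      omega
  · intro B hBflow hBcov
    choose φ hφB hφvan hφmax using fun r : Fin k => hBcov (Fset k r.1) (Fset_card k r.1)
    have hval : ∀ r : Fin k, aT k (φ r) 0 = 1 := by
      intro r
      have h1 := (hφmax r).2 (fP k r.1) (fP_isFlow k r.1 r.2) (fP_vanish k r.1)
      rw [flowValue_eq, flowValue_eq, aT_fP, if_pos ⟨by omega, Nat.zero_le _⟩] at h1
      have h2 := aT_le_one k (φ r) (hBflow _ (hφB r)).1 0
      omega
    have hrung : ∀ r : Fin k, ∀ j, j < k → aR k (φ r) j = if j = r.1 then 1 else 0 := by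
      intro r
      have hgf := hBflow _ (hφB r)
      apply rung_determined k r.1 r.2 _ _ _
        (aT_le_one k _ hgf.1) (aR_le_one k _ hgf.1) (aB_le_one k _ hgf.1)
        (fun j a b => conserve_u k _ hgf.2 j a b)
        (fun j a b => conserve_w k _ hgf.2 j a b)
        (hval r) ?_ ?_
      · by_cases h : r.1 + 1 < k
        · rw [aT, dif_pos h]; exact hφvan r _ (mem_top k r.1 h)
        · exact aT_zero k _ _ (by omega)
      · intro h1
        rw [aB, dif_pos (show r.1 - 1 < k by have := r.2; omega)]
        exact hφvan r _ (mem_bot k r.1 _ h1)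
    have hinj : Set.InjOn φ (Finset.univ : Finset (Fin k)) := by
      intro r1 _ r2 _ hEq
      have h1 := hrung r1 r1.1 r1.2
      have h2 := hrung r2 r1.1 r1.2
      rw [if_pos rfl] at h1
      rw [hEq] at h1
      rw [h1] at h2
      apply Fin.ext
      by_contra hne
      rw [if_neg hne] at h2
      omega
    have hcard := Finset.card_le_card_of_injOn φ (fun r _ => hφB r) hinj
    rw [Finset.card_univ, Fintype.card_fin] at hcard
    omega
end

section
/- The value of a maximum integral (s,t)-flow of the capacitated graph H equals λ(λ + 1). -/
open Finset

set_option linter.unusedSectionVars false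

namespace MFMC

attribute [local instance] Classical.propDecidable

open Digraph'

variable {V E : Type} [Fintype V] [DecidableEq V] [Fintype E] [DecidableEq E]
variable (G : Digraph' V E) (s t : V) (c : E → ℕ)

/-- excess at v : inflow minus outflow, over ℤ. -/
def exZ (h : E → ℕ) (v : V) : ℤ :=
  (∑ e ∈ univ.filter (fun e => G.tgt e = v), (h e : ℤ)) -
    ∑ e ∈ univ.filter (fun e => G.src e = v), (h e : ℤ)

lemma flowValue_eq_neg_exZ (h : E → ℕ) : G.flowValue s h = - exZ G h s := by
  unfold flowValue exZ; ring

lemma conserves_iff (h : E → ℕ) :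
    G.Conserves s t h ↔ ∀ v, v ≠ s → v ≠ t → exZ G h v = 0 := by
  unfold Conserves exZ
  constructor
  · intro H v hs ht
    rw [sub_eq_zero]
    exact_mod_cast H v hs ht
  · intro H v hs ht
    have := H v hs ht
    rw [sub_eq_zero] at this
    exact_mod_cast this

def rstep (h : E → ℕ) (u v : V) : Prop :=
  ∃ e, (G.src e = u ∧ G.tgt e = v ∧ h e < c e) ∨ (G.src e = v ∧ G.tgt e = u ∧ 0 < h e)

/-- residual path to t of length ≤ n -/
def RP (h : E → ℕ) : ℕ → V → Prop
  | 0, u => u = t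
  | (n+1), u => RP h n u ∨ ∃ w, rstep G c h u w ∧ RP h n w

lemma RP_succ_of (h : E → ℕ) {n : ℕ} {u : V} (H : RP G t c h n u) : RP G t c h (n+1) u :=
  Or.inl H

lemma RP_mono (h : E → ℕ) {m n : ℕ} (hmn : m ≤ n) {u : V} (H : RP G t c h m u) :
    RP G t c h n u := by
  induction n with
  | zero => simpa [Nat.le_zero.mp hmn] using H
  | succ n ih =>
    rcases Nat.lt_or_ge m (n+1) with hlt | hge
    · exact Or.inl (ih (Nat.lt_succ_iff.mp hlt))
    · have : m = n + 1 := le_antisymm hmn hge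
      subst this; exact H

lemma reach_RP (h : E → ℕ) {u : V} (H : Relation.ReflTransGen (rstep G c h) u t) :
    ∃ n, RP G t c h n u := by
  induction H using Relation.ReflTransGen.head_induction_on with
  | refl => exact ⟨0, rfl⟩
  | head step _ ih =>
    obtain ⟨n, hn⟩ := ih
    exact ⟨n+1, Or.inr ⟨_, step, hn⟩⟩

lemma sum_filter_update (h : E → ℕ) (e : E) (a : ℕ) (p : E → Prop) [DecidablePred p] :
    ∑ x ∈ univ.filter p, ((Function.update h e a) x : ℤ)
      = (∑ x ∈ univ.filter p, (h x : ℤ)) + (if p e then (a : ℤ) - h e else 0) := by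
  by_cases hp : p e
  · have he : e ∈ univ.filter p := by simp [hp]
    rw [if_pos hp, ← Finset.sum_erase_add _ _ he, ← Finset.sum_erase_add _ (fun x => (h x : ℤ)) he]
    have : ∑ x ∈ (univ.filter p).erase e, ((Function.update h e a) x : ℤ)
        = ∑ x ∈ (univ.filter p).erase e, (h x : ℤ) := by
      refine Finset.sum_congr rfl fun x hx => ?_
      rw [Function.update_of_ne (Finset.ne_of_mem_erase hx)]
    rw [this, Function.update_self]
    ring
  · rw [if_neg hp, add_zero]
    refine Finset.sum_congr rfl fun x hx => ?_
    have : x ≠ e := fun hxe => hp (hxe ▸ (Finset.mem_filter.mp hx).2)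
    rw [Function.update_of_ne this]

lemma exZ_update (h : E → ℕ) (e : E) (a : ℕ) (v : V) :
    exZ G (Function.update h e a) v
      = exZ G h v + (if G.tgt e = v then (a : ℤ) - h e else 0)
        - (if G.src e = v then (a : ℤ) - h e else 0) := by
  unfold exZ
  rw [sum_filter_update, sum_filter_update]
  ring

lemma RP_block (h h1 : E → ℕ) (u : V)
    (H1 : ∀ x y, x ≠ u → rstep G c h x y → rstep G c h1 x y) :
    ∀ m, ¬ RP G t c h m u → ∀ w, RP G t c h m w → RP G t c h1 m w := by
  intro m
  induction m with
  | zero => intro _ w hw; exact hw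
  | succ m ih =>
    intro hu w hw
    have hu' : ¬ RP G t c h m u := fun hh => hu (Or.inl hh)
    rcases hw with hw | ⟨w', hstep, hw'⟩
    · exact Or.inl (ih hu' w hw)
    · have hwu : w ≠ u := fun hwe => hu (hwe ▸ Or.inr ⟨w', hstep, hw'⟩)
      exact Or.inr ⟨w', H1 w w' hwu hstep, ih hu' w' hw'⟩

lemma iteswap (a : ℤ) (x v : V) [Decidable (x = v)] [Decidable (v = x)] :
    (if x = v then a else 0) = (if v = x then a else 0) := by
  by_cases h : x = v
  · rw [if_pos h, if_pos h.symm]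
  · rw [if_neg h, if_neg (fun hh => h hh.symm)]

lemma ite_neg_one (P : Prop) [Decidable P] :
    (if P then (-1 : ℤ) else 0) = -(if P then 1 else 0) := by
  split_ifs <;> ring

lemma aug : ∀ n (h : E → ℕ) (u : V), (∀ e, h e ≤ c e) → RP G t c h n u →
    ∃ h' : E → ℕ, (∀ e, h' e ≤ c e) ∧
      ∀ v, exZ G h' v = exZ G h v + (if v = t then 1 else 0) - (if v = u then 1 else 0) := by
  intro n
  induction n using Nat.strongRecOn with
  | ind n IH =>
    intro h u hcap hrp
    by_cases hmin : ∀ m, m < n → ¬ RP G t c h m u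
    · match n, hrp, hmin with
      | 0, hrp, _ =>
        subst hrp
        exact ⟨h, hcap, fun v => by simp⟩
      | (m+1), hrp, hmin =>
        have hnm : ¬ RP G t c h m u := hmin m (Nat.lt_succ_self m)
        rcases hrp with hrp | ⟨w, hstep, hw⟩
        · exact absurd hrp hnm
        rcases hstep with ⟨e, ⟨hsrc, htgt, hlt⟩ | ⟨hsrc, htgt, hpos⟩⟩
        · -- forward push on e : u → w
          set h1 := Function.update h e (h e + 1) with hh1
          have hcap1 : ∀ e', h1 e' ≤ c e' := by
            intro e'
            by_cases he' : e' = e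
            · subst he'; rw [hh1, Function.update_self]; omega
            · rw [hh1, Function.update_of_ne he']; exact hcap e'
          have H1 : ∀ x y, x ≠ u → rstep G c h x y → rstep G c h1 x y := by
            rintro x y hxu ⟨e', ⟨h1', h2', h3'⟩ | ⟨h1', h2', h3'⟩⟩
            · by_cases he' : e' = e
              · exact absurd (h1' ▸ he' ▸ hsrc) hxu
              · exact ⟨e', Or.inl ⟨h1', h2', by rwa [hh1, Function.update_of_ne he']⟩⟩
            · refine ⟨e', Or.inr ⟨h1', h2', ?_⟩⟩
              by_cases he' : e' = e
              · subst he'; rw [hh1, Function.update_self]; omega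
              · rwa [hh1, Function.update_of_ne he']
          have hw1 : RP G t c h1 m w := RP_block G t c h h1 u H1 m hnm w hw
          obtain ⟨h', hcap', hdel⟩ := IH m (Nat.lt_succ_self m) h1 w hcap1 hw1
          refine ⟨h', hcap', fun v => ?_⟩
          have hthis := exZ_update G h e (h e + 1) v
          rw [← hh1] at hthis
          have hval : ((h e + 1 : ℕ) : ℤ) - (h e : ℤ) = 1 := by push_cast; ring
          rw [hval, hsrc, htgt, iteswap 1 w v, iteswap 1 u v] at hthis
          rw [hdel v, hthis]
          ring
        · -- backward push on e : src e = w, tgt e = u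
          set h1 := Function.update h e (h e - 1) with hh1
          have hcap1 : ∀ e', h1 e' ≤ c e' := by
            intro e'
            by_cases he' : e' = e
            · subst he'; rw [hh1, Function.update_self]; have := hcap e'; omega
            · rw [hh1, Function.update_of_ne he']; exact hcap e'
          have H1 : ∀ x y, x ≠ u → rstep G c h x y → rstep G c h1 x y := by
            rintro x y hxu ⟨e', ⟨h1', h2', h3'⟩ | ⟨h1', h2', h3'⟩⟩
            · refine ⟨e', Or.inl ⟨h1', h2', ?_⟩⟩
              by_cases he' : e' = e
              · subst he'; rw [hh1, Function.update_self]; have := hcap e'; omega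
              · rwa [hh1, Function.update_of_ne he']
            · by_cases he' : e' = e
              · exact absurd (h2' ▸ he' ▸ htgt) hxu
              · exact ⟨e', Or.inr ⟨h1', h2', by rwa [hh1, Function.update_of_ne he']⟩⟩
          have hw1 : RP G t c h1 m w := RP_block G t c h h1 u H1 m hnm w hw
          obtain ⟨h', hcap', hdel⟩ := IH m (Nat.lt_succ_self m) h1 w hcap1 hw1
          refine ⟨h', hcap', fun v => ?_⟩
          have hthis := exZ_update G h e (h e - 1) v
          rw [← hh1] at hthis
          have hval : ((h e - 1 : ℕ) : ℤ) - (h e : ℤ) = -1 := by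
            have h1le : 1 ≤ h e := hpos
            push_cast [h1le]; ring
          rw [hval, hsrc, htgt, iteswap (-1) u v, iteswap (-1) w v, ite_neg_one, ite_neg_one] at hthis
          rw [hdel v, hthis]
          ring
    · push_neg at hmin
      obtain ⟨m, hm, hrm⟩ := hmin
      exact IH m hm h u hcap hrm


lemma sum_collapse (g : E → V) (S : Finset V) (h : E → ℕ) :
    ∑ v ∈ S, ∑ e ∈ univ.filter (fun e => g e = v), (h e : ℤ)
      = ∑ e ∈ univ.filter (fun e => g e ∈ S), (h e : ℤ) := by
  have key := Finset.sum_fiberwise_of_maps_to (s := univ.filter (fun e => g e ∈ S)) (t := S)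
    (g := g) (fun e he => (Finset.mem_filter.mp he).2) (fun e => (h e : ℤ))
  rw [← key]
  refine Finset.sum_congr rfl fun j hj => Finset.sum_congr ?_ fun _ _ => rfl
  ext e
  simp only [Finset.mem_filter, Finset.mem_univ, true_and]
  exact ⟨fun h2 => ⟨by rw [h2]; exact hj, h2⟩, fun h2 => h2.2⟩

lemma flow_eq_cut (h : E → ℕ) (hcons : G.Conserves s t h) (S : Finset V)
    (hs : s ∈ S) (ht : t ∉ S) :
    G.flowValue s h =
      (∑ e ∈ univ.filter (fun e => G.src e ∈ S ∧ G.tgt e ∉ S), (h e : ℤ)) -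
        ∑ e ∈ univ.filter (fun e => G.tgt e ∈ S ∧ G.src e ∉ S), (h e : ℤ) := by
  have hzero := (conserves_iff G s t h).mp hcons
  have eq1 : ∑ v ∈ S, exZ G h v = exZ G h s :=
    Finset.sum_eq_single_of_mem s hs fun v hv hne =>
      hzero v hne (fun hvt => ht (hvt ▸ hv))
  have eq2 : ∑ v ∈ S, exZ G h v
      = (∑ e ∈ univ.filter (fun e => G.tgt e ∈ S), (h e : ℤ))
        - ∑ e ∈ univ.filter (fun e => G.src e ∈ S), (h e : ℤ) := by
    unfold exZ
    rw [Finset.sum_sub_distrib, sum_collapse, sum_collapse]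
  have eq3 : (∑ e ∈ univ.filter (fun e => G.tgt e ∈ S), (h e : ℤ))
      = (∑ e ∈ univ.filter (fun e => G.tgt e ∈ S ∧ G.src e ∈ S), (h e : ℤ))
        + ∑ e ∈ univ.filter (fun e => G.tgt e ∈ S ∧ G.src e ∉ S), (h e : ℤ) := by
    rw [← Finset.filter_filter, ← Finset.filter_filter,
      Finset.sum_filter_add_sum_filter_not]
  have eq4 : (∑ e ∈ univ.filter (fun e => G.src e ∈ S), (h e : ℤ))
      = (∑ e ∈ univ.filter (fun e => G.src e ∈ S ∧ G.tgt e ∈ S), (h e : ℤ))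
        + ∑ e ∈ univ.filter (fun e => G.src e ∈ S ∧ G.tgt e ∉ S), (h e : ℤ) := by
    rw [← Finset.filter_filter, ← Finset.filter_filter,
      Finset.sum_filter_add_sum_filter_not]
  have eq5 : (∑ e ∈ univ.filter (fun e => G.tgt e ∈ S ∧ G.src e ∈ S), (h e : ℤ))
      = ∑ e ∈ univ.filter (fun e => G.src e ∈ S ∧ G.tgt e ∈ S), (h e : ℤ) := by
    refine Finset.sum_congr ?_ fun _ _ => rfl
    ext e
    simp only [Finset.mem_filter, Finset.mem_univ, true_and]
    exact and_comm
  have eqv := flowValue_eq_neg_exZ G s h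
  linarith [eq1, eq2, eq3, eq4, eq5, eqv]

lemma flow_le_cutcap (h : E → ℕ) (hcap : ∀ e, h e ≤ c e) (hcons : G.Conserves s t h)
    (C : Finset E) (hC : G.IsCut s t C) :
    G.flowValue s h ≤ ∑ e ∈ C, (c e : ℤ) := by
  set S : Finset V := univ.filter (fun v => G.ReachAvoid C s v) with hS
  have hs : s ∈ S := Finset.mem_filter.mpr ⟨Finset.mem_univ _, Relation.ReflTransGen.refl⟩
  have ht : t ∉ S := fun hh => hC ((Finset.mem_filter.mp hh).2)
  have hsub : univ.filter (fun e => G.src e ∈ S ∧ G.tgt e ∉ S) ⊆ C := by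
    intro e he
    obtain ⟨-, h1, h2⟩ := Finset.mem_filter.mp he
    by_contra heC
    have hreach : G.ReachAvoid C s (G.tgt e) :=
      ((Finset.mem_filter.mp h1).2).tail ⟨e, heC, rfl, rfl⟩
    exact h2 (Finset.mem_filter.mpr ⟨Finset.mem_univ _, hreach⟩)
  have hfe := flow_eq_cut G s t h hcons S hs ht
  have h1 : (∑ e ∈ univ.filter (fun e => G.src e ∈ S ∧ G.tgt e ∉ S), (h e : ℤ))
      ≤ ∑ e ∈ univ.filter (fun e => G.src e ∈ S ∧ G.tgt e ∉ S), (c e : ℤ) :=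
    Finset.sum_le_sum fun i _ => by exact_mod_cast hcap i
  have h2 : (∑ e ∈ univ.filter (fun e => G.src e ∈ S ∧ G.tgt e ∉ S), (c e : ℤ))
      ≤ ∑ e ∈ C, (c e : ℤ) :=
    Finset.sum_le_sum_of_subset_of_nonneg hsub fun i _ _ => by positivity
  have h3 : (0:ℤ) ≤ ∑ e ∈ univ.filter (fun e => G.tgt e ∈ S ∧ G.src e ∉ S), (h e : ℤ) :=
    Finset.sum_nonneg fun i _ => by positivity
  linarith

lemma exists_max :
    ∃ h : E → ℕ, (∀ e, h e ≤ c e) ∧ G.Conserves s t h ∧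
      ∀ h', (∀ e, h' e ≤ c e) → G.Conserves s t h' →
        G.flowValue s h' ≤ G.flowValue s h := by
  have bound : ∀ z : ℤ, (∃ h : E → ℕ, (∀ e, h e ≤ c e) ∧ G.Conserves s t h ∧
      G.flowValue s h = z) → z ≤ ∑ e, (c e : ℤ) := by
    rintro z ⟨h, hcap, -, rfl⟩
    unfold Digraph'.flowValue
    have h1 : (∑ e ∈ univ.filter (fun e => G.src e = s), (h e : ℤ))
        ≤ ∑ e ∈ univ.filter (fun e => G.src e = s), (c e : ℤ) :=
      Finset.sum_le_sum fun i _ => by exact_mod_cast hcap i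
    have h2 : (∑ e ∈ univ.filter (fun e => G.src e = s), (c e : ℤ)) ≤ ∑ e, (c e : ℤ) :=
      Finset.sum_le_sum_of_subset_of_nonneg (Finset.filter_subset _ _)
        fun i _ _ => by positivity
    have h3 : (0:ℤ) ≤ ∑ e ∈ univ.filter (fun e => G.tgt e = s), (h e : ℤ) :=
      Finset.sum_nonneg fun i _ => by positivity
    linarith
  have hne : ∃ z : ℤ, ∃ h : E → ℕ, (∀ e, h e ≤ c e) ∧ G.Conserves s t h ∧
      G.flowValue s h = z := by
    refine ⟨0, fun _ => 0, fun _ => Nat.zero_le _, ?_, ?_⟩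
    · intro v _ _; simp
    · unfold Digraph'.flowValue; simp
  obtain ⟨m, ⟨h, hcap, hcons, hval⟩, hub⟩ :=
    Int.exists_greatest_of_bdd ⟨∑ e, (c e : ℤ), bound⟩ hne
  exact ⟨h, hcap, hcons, fun h' hcap' hcons' => hval ▸ hub _ ⟨h', hcap', hcons', rfl⟩⟩

/-- Integral max-flow min-cut. -/
lemma maxflow_mincut (hst : s ≠ t) :
    ∃ (h : E → ℕ) (C : Finset E), (∀ e, h e ≤ c e) ∧ G.Conserves s t h ∧
      G.IsCut s t C ∧ G.flowValue s h = ∑ e ∈ C, (c e : ℤ) ∧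
      ∀ h', (∀ e, h' e ≤ c e) → G.Conserves s t h' →
        G.flowValue s h' ≤ G.flowValue s h := by
  obtain ⟨h, hcap, hcons, hmax⟩ := exists_max G s t c
  have hnr : ¬ Relation.ReflTransGen (rstep G c h) s t := by
    intro hr
    obtain ⟨n, hn⟩ := reach_RP G t c h hr
    obtain ⟨h', hcap', hdel⟩ := aug G t c n h s hcap hn
    have hcons' : G.Conserves s t h' := by
      rw [conserves_iff G s t]
      intro v hvs hvt
      rw [hdel v, if_neg hvt, if_neg hvs]
      have := (conserves_iff G s t h).mp hcons v hvs hvt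
      linarith
    have hv' : G.flowValue s h' = G.flowValue s h + 1 := by
      rw [flowValue_eq_neg_exZ, flowValue_eq_neg_exZ, hdel s, if_neg hst, if_pos rfl]
      ring
    have := hmax h' hcap' hcons'
    linarith
  set S : Finset V := univ.filter (fun v => Relation.ReflTransGen (rstep G c h) s v) with hS
  have hs : s ∈ S := Finset.mem_filter.mpr ⟨Finset.mem_univ _, Relation.ReflTransGen.refl⟩
  have ht : t ∉ S := fun hh => hnr ((Finset.mem_filter.mp hh).2)
  set C : Finset E := univ.filter (fun e => G.src e ∈ S ∧ G.tgt e ∉ S) with hC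
  have hcut : G.IsCut s t C := by
    intro hreach
    have key : ∀ v, G.ReachAvoid C s v → v ∈ S := by
      intro v hv
      induction hv with
      | refl => exact hs
      | tail _ hbc ih =>
        obtain ⟨e, heC, hsrc, htgt⟩ := hbc
        by_contra hc
        exact heC (Finset.mem_filter.mpr ⟨Finset.mem_univ _, hsrc ▸ ih, htgt ▸ hc⟩)
    exact ht (key t hreach)
  have hsat : ∀ e ∈ C, h e = c e := by
    intro e he
    obtain ⟨-, h1, h2⟩ := Finset.mem_filter.mp he
    by_contra hne
    have hlt : h e < c e := lt_of_le_of_ne (hcap e) hne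
    have : G.tgt e ∈ S := Finset.mem_filter.mpr ⟨Finset.mem_univ _,
      ((Finset.mem_filter.mp h1).2).tail ⟨e, Or.inl ⟨rfl, rfl, hlt⟩⟩⟩
    exact h2 this
  have hzero : ∀ e, G.tgt e ∈ S → G.src e ∉ S → h e = 0 := by
    intro e h1 h2
    by_contra hne
    have hpos : 0 < h e := Nat.pos_of_ne_zero hne
    have : G.src e ∈ S := Finset.mem_filter.mpr ⟨Finset.mem_univ _,
      ((Finset.mem_filter.mp h1).2).tail ⟨e, Or.inr ⟨rfl, rfl, hpos⟩⟩⟩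
    exact h2 this
  refine ⟨h, C, hcap, hcons, hcut, ?_, hmax⟩
  have hfe := flow_eq_cut G s t h hcons S hs ht
  have e1 : (∑ e ∈ univ.filter (fun e => G.src e ∈ S ∧ G.tgt e ∉ S), (h e : ℤ))
      = ∑ e ∈ C, (c e : ℤ) := by
    rw [hC]
    refine Finset.sum_congr rfl fun e he => ?_
    rw [hsat e (hC ▸ he)]
  have e2 : (∑ e ∈ univ.filter (fun e => G.tgt e ∈ S ∧ G.src e ∉ S), (h e : ℤ)) = 0 := by
    refine Finset.sum_eq_zero fun e he => ?_
    obtain ⟨-, h1, h2⟩ := Finset.mem_filter.mp he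
    rw [hzero e h1 h2]; rfl
  rw [hfe, e1, e2, sub_zero]

end MFMC

/-- Let `H` be the capacitated graph on `G` where critical edges get
capacity `λ+1` and non-critical edges capacity `λ`. Then the maximum value of an
integral `(s,t)`-flow of `H` equals `λ(λ+1)`: there is an integral flow respecting the
capacities of value `λ(λ+1)`, and every such flow has value at most `λ(λ+1)`. -/
theorem stmt5 {V E : Type} [Fintype V] [DecidableEq V] [Fintype E] [DecidableEq E]
    (G : Digraph' V E) (s t : V) (hst : s ≠ t) (lam : ℕ)
    (hmax : G.IsMaxFlowValue s t ∅ lam) :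
    (∃ h : E → ℕ, G.Conserves s t h ∧
        (∀ e, (G.Critical s t e → h e ≤ lam + 1) ∧ (¬ G.Critical s t e → h e ≤ lam)) ∧
        G.flowValue s h = lam * (lam + 1)) ∧
    (∀ h : E → ℕ, G.Conserves s t h →
        (∀ e, (G.Critical s t e → h e ≤ lam + 1) ∧ (¬ G.Critical s t e → h e ≤ lam)) →
        G.flowValue s h ≤ lam * (lam + 1)) := by
  classical
  obtain ⟨⟨f0, hf0flow, -, hf0val⟩, hflowle⟩ := hmax
  -- Step A: unit-capacity max-flow min-cut gives a min cut C1 of size lam,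
  -- whose edges are all critical.
  obtain ⟨h1, C1, hcap1, hcons1, hcut1, hval1, hmax1⟩ :=
    MFMC.maxflow_mincut G s t (fun _ => 1) hst
  have hle1 : G.flowValue s h1 ≤ (lam : ℤ) :=
    hflowle h1 ⟨hcap1, hcons1⟩ (by simp)
  have hge1 : (lam : ℤ) ≤ G.flowValue s h1 :=
    hf0val ▸ hmax1 f0 hf0flow.1 hf0flow.2
  have hv1 : G.flowValue s h1 = (lam : ℤ) := le_antisymm hle1 hge1
  have hcard1 : (C1.card : ℤ) = (lam : ℤ) := by
    have hs : (∑ e ∈ C1, (((fun _ => 1) : E → ℕ) e : ℤ)) = (C1.card : ℤ) := by simp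
    rw [hval1, hs] at hv1
    exact hv1
  have hmincard : ∀ C' : Finset E, G.IsCut s t C' → (lam : ℤ) ≤ (C'.card : ℤ) := by
    intro C' hC'
    have hcc := MFMC.flow_le_cutcap G s t (fun _ => 1) f0 hf0flow.1 hf0flow.2 C' hC'
    have hs : (∑ e ∈ C', (((fun _ => 1) : E → ℕ) e : ℤ)) = (C'.card : ℤ) := by simp
    rw [hs, hf0val] at hcc
    exact hcc
  have hminC1 : G.IsMinCut s t C1 := by
    refine ⟨hcut1, fun C' hC' => ?_⟩
    have := hmincard C' hC'
    rw [← hcard1] at this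
    exact_mod_cast this
  have hcritC1 : ∀ e ∈ C1, G.Critical s t e := fun e he => ⟨C1, hminC1, he⟩
  -- Step B: the capacitated graph H.
  set cH : E → ℕ := fun e => if G.Critical s t e then lam + 1 else lam with hcH
  obtain ⟨hH, CH, hcapH, hconsH, hcutH, hvalH, hmaxH⟩ :=
    MFMC.maxflow_mincut G s t cH hst
  -- upper bound
  have upper : ∀ h : E → ℕ, G.Conserves s t h →
      (∀ e, (G.Critical s t e → h e ≤ lam + 1) ∧ (¬ G.Critical s t e → h e ≤ lam)) →
      G.flowValue s h ≤ (lam : ℤ) * ((lam : ℤ) + 1) := by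
    intro h hcons hcond
    have hcap : ∀ e, h e ≤ cH e := by
      intro e
      by_cases hc : G.Critical s t e
      · rw [hcH]; simp only [if_pos hc]; exact (hcond e).1 hc
      · rw [hcH]; simp only [if_neg hc]; exact (hcond e).2 hc
    have hcc := MFMC.flow_le_cutcap G s t cH h hcap hcons C1 hcut1
    have hsum : (∑ e ∈ C1, (cH e : ℤ)) = (C1.card : ℤ) * ((lam : ℤ) + 1) := by
      have hall : ∀ e ∈ C1, (cH e : ℤ) = (lam : ℤ) + 1 := by
        intro e he
        rw [hcH]; simp only [if_pos (hcritC1 e he)]; push_cast; ring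
      rw [Finset.sum_congr rfl hall, Finset.sum_const, nsmul_eq_mul]
    rw [hsum, hcard1] at hcc
    exact hcc
  -- lower bound for the max flow of H
  have hCHge : (lam : ℤ) ≤ (CH.card : ℤ) := hmincard CH hcutH
  have lower : (lam : ℤ) * ((lam : ℤ) + 1) ≤ G.flowValue s hH := by
    rw [hvalH]
    by_cases hall : ∀ e ∈ CH, G.Critical s t e
    · have heq : ∀ e ∈ CH, (cH e : ℤ) = (lam : ℤ) + 1 := by
        intro e he
        rw [hcH]; simp only [if_pos (hall e he)]; push_cast; ring
      rw [Finset.sum_congr rfl heq, Finset.sum_const, nsmul_eq_mul]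
      have hl0 : (0:ℤ) ≤ (lam : ℤ) + 1 := by positivity
      nlinarith
    · push_neg at hall
      obtain ⟨e0, he0, hncrit⟩ := hall
      have hCHgt : (lam : ℤ) + 1 ≤ (CH.card : ℤ) := by
        rcases lt_or_eq_of_le hCHge with hlt | heq
        · exact hlt
        · exfalso
          have hmin : G.IsMinCut s t CH := by
            refine ⟨hcutH, fun C' hC' => ?_⟩
            have := hmincard C' hC'
            rw [heq] at this
            exact_mod_cast this
          exact hncrit ⟨CH, hmin, he0⟩
      have hge : ∀ e ∈ CH, (lam : ℤ) ≤ (cH e : ℤ) := by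
        intro e he
        rw [hcH]
        by_cases hc : G.Critical s t e
        · simp only [if_pos hc]; push_cast; linarith
        · simp only [if_neg hc]; exact le_refl _
      have hsum : (CH.card : ℤ) * (lam : ℤ) ≤ ∑ e ∈ CH, (cH e : ℤ) := by
        have := Finset.sum_le_sum hge
        rwa [Finset.sum_const, nsmul_eq_mul] at this
      nlinarith
  have hvH : G.flowValue s hH = (lam : ℤ) * ((lam : ℤ) + 1) := by
    refine le_antisymm (upper hH hconsH ?_) lower
    · intro e
      constructor
      · intro hc
        have := hcapH e
        rw [hcH] at this; simp only [if_pos hc] at this; exact this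
      · intro hc
        have := hcapH e
        rw [hcH] at this; simp only [if_neg hc] at this; exact this
  constructor
  · refine ⟨hH, hconsH, ?_, ?_⟩
    · intro e
      constructor
      · intro hc
        have := hcapH e
        rw [hcH] at this; simp only [if_pos hc] at this; exact this
      · intro hc
        have := hcapH e
        rw [hcH] at this; simp only [if_neg hc] at this; exact this
    · exact_mod_cast hvH
  · intro h hcons hcond
    exact_mod_cast upper h hcons hcond
end

section
/- Let i ≥ 1 be an integer and let h : E → ℕ be an integral flow of G of value λ·i satisfying h(e) ≤ i for every edge e ∈ E. Then there exists an (s,t)-flow f : E → {0,1} of G of value λ (hence a maximum (s,t)-flow of G) such that f(e) = 0 for every edge e with h(e) = 0, and f(e) = 1 for every edge e with h(e) = i. -/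
open Finset

set_option linter.unusedSectionVars false

namespace Stmt6Aux

variable {V E : Type} [Fintype V] [DecidableEq V] [Fintype E] [DecidableEq E]

def inS (G : Digraph' V E) (g : E → ℚ) (v : V) : ℚ :=
  ∑ e ∈ univ.filter (fun e => G.tgt e = v), g e

def outS (G : Digraph' V E) (g : E → ℚ) (v : V) : ℚ :=
  ∑ e ∈ univ.filter (fun e => G.src e = v), g e

lemma sum_net (G : Digraph' V E) (g : E → ℚ) :
    ∑ v, (inS G g v - outS G g v) = 0 := by
  rw [Finset.sum_sub_distrib]
  simp only [inS, outS]
  rw [Finset.sum_fiberwise univ G.tgt g, Finset.sum_fiberwise univ G.src g, sub_self]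

lemma inS_add (G : Digraph' V E) (g d : E → ℚ) (c : ℚ) (v : V) :
    inS G (fun e => g e + c * d e) v = inS G g v + c * inS G d v := by
  simp [inS, Finset.sum_add_distrib, Finset.mul_sum]

lemma outS_add (G : Digraph' V E) (g d : E → ℚ) (c : ℚ) (v : V) :
    outS G (fun e => g e + c * d e) v = outS G g v + c * outS G d v := by
  simp [outS, Finset.sum_add_distrib, Finset.mul_sum]

structure Valid (G : Digraph' V E) (s t : V) (lam i : ℕ) (h : E → ℕ) (g : E → ℚ) : Prop where
  nonneg : ∀ e, 0 ≤ g e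
  le : ∀ e, g e ≤ (i : ℚ)
  cons : ∀ v, v ≠ s → v ≠ t → inS G g v = outS G g v
  val : outS G g s - inS G g s = (lam : ℚ) * (i : ℚ)
  zero : ∀ e, h e = 0 → g e = 0
  sat : ∀ e, h e = i → g e = (i : ℚ)

def Frac (i : ℕ) (g : E → ℚ) : Finset E :=
  univ.filter (fun e => g e ≠ 0 ∧ g e ≠ (i : ℚ))

variable {G : Digraph' V E} {s t : V} {lam i : ℕ} {h : E → ℕ} {g : E → ℚ}

lemma netAt (hg : Valid G s t lam i h g) (hst : s ≠ t) (v : V) :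
    inS G g v - outS G g v =
      ((if v = s then -(lam : ℤ) else if v = t then (lam : ℤ) else 0 : ℤ) : ℚ) * (i : ℚ) := by
  by_cases hvs : v = s
  · subst hvs
    simp only [if_pos rfl]
    push_cast
    linarith [hg.val]
  by_cases hvt : v = t
  · subst hvt
    have h0 := sum_net G g
    have hsum : ∑ x ∈ ({s, v} : Finset V), (inS G g x - outS G g x)
        = ∑ x, (inS G g x - outS G g x) := by
      apply Finset.sum_subset (Finset.subset_univ _)
      intro x _ hxn
      simp only [Finset.mem_insert, Finset.mem_singleton, not_or] at hxn
      rw [hg.cons x hxn.1 hxn.2, sub_self]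
    rw [← hsum, Finset.sum_pair hst] at h0
    simp only [if_neg hvs, if_pos rfl]
    have hs : inS G g s - outS G g s = -((lam : ℚ) * i) := by linarith [hg.val]
    push_cast
    linarith
  · simp only [if_neg hvs, if_neg hvt]
    rw [hg.cons v hvs hvt, sub_self]
    simp

lemma nonfrac_sum (i : ℕ) (g : E → ℚ) (S : Finset E)
    (hS : ∀ e ∈ S, g e = 0 ∨ g e = (i : ℚ)) :
    ∃ m : ℕ, ∑ e ∈ S, g e = (m : ℚ) * i := by
  classical
  refine ⟨(S.filter (fun e => g e = (i : ℚ))).card, ?_⟩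
  rw [← Finset.sum_filter_add_sum_filter_not S (fun e => g e = (i : ℚ))]
  have h2 : ∑ e ∈ S.filter (fun e => ¬ g e = (i : ℚ)), g e = 0 := by
    apply Finset.sum_eq_zero
    intro e he
    rw [Finset.mem_filter] at he
    rcases hS e he.1 with h | h
    · exact h
    · exact absurd h he.2
  rw [h2, add_zero]
  rw [Finset.sum_congr rfl (fun e he => (Finset.mem_filter.mp he).2), Finset.sum_const,
    nsmul_eq_mul]



lemma degree_two (hg : Valid G s t lam i h g) (hst : s ≠ t) (hi : 1 ≤ i)
    (hnl : ∀ e ∈ Frac i g, G.src e ≠ G.tgt e)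
    (v : V) (e1 : E) (he1 : e1 ∈ Frac i g) (hinc : G.tgt e1 = v ∨ G.src e1 = v) :
    2 ≤ ((Frac i g).filter (fun e => G.tgt e = v)).card
        + ((Frac i g).filter (fun e => G.src e = v)).card := by
  classical
  by_contra hlt
  push_neg at hlt
  set A := (Frac i g).filter (fun e => G.tgt e = v) with hA
  set B := (Frac i g).filter (fun e => G.src e = v) with hB
  have hdisj : Disjoint A B := by
    rw [Finset.disjoint_left]
    intro e heA heB
    rw [hA, Finset.mem_filter] at heA
    rw [hB, Finset.mem_filter] at heB
    exact hnl e heA.1 (heB.2.trans heA.2.symm)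
  have he1' : e1 ∈ A ∪ B := by
    rcases hinc with h1 | h1
    · exact Finset.mem_union_left _ (Finset.mem_filter.mpr ⟨he1, h1⟩)
    · exact Finset.mem_union_right _ (Finset.mem_filter.mpr ⟨he1, h1⟩)
  have hABcard : (A ∪ B).card = 1 := by
    have hc := Finset.card_union_of_disjoint hdisj
    have h1 : 1 ≤ (A ∪ B).card := Finset.card_pos.mpr ⟨e1, he1'⟩
    omega
  obtain ⟨a, ha⟩ := Finset.card_eq_one.mp hABcard
  have hae : a = e1 := by
    rw [ha, Finset.mem_singleton] at he1'
    exact he1'.symm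
  rw [hae] at ha
  -- decompose inS and outS
  have hfibT : (univ.filter (fun e => G.tgt e = v)).filter (fun e => e ∈ Frac i g) = A := by
    ext e
    simp only [hA, Finset.mem_filter, Finset.mem_univ, true_and, Frac]
    tauto
  have hfibS : (univ.filter (fun e => G.src e = v)).filter (fun e => e ∈ Frac i g) = B := by
    ext e
    simp only [hB, Finset.mem_filter, Finset.mem_univ, true_and, Frac]
    tauto
  have hnf : ∀ (S : Finset E), ∀ e ∈ S.filter (fun e => ¬ e ∈ Frac i g), g e = 0 ∨ g e = (i : ℚ) := by
    intro S e he
    rw [Finset.mem_filter] at he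
    have := he.2
    simp only [Frac, Finset.mem_filter, Finset.mem_univ, true_and, not_and, not_not] at this
    by_cases h0 : g e = 0
    · exact Or.inl h0
    · exact Or.inr (this h0)
  obtain ⟨mIn, hmIn⟩ := nonfrac_sum i g ((univ.filter (fun e => G.tgt e = v)).filter
    (fun e => ¬ e ∈ Frac i g)) (hnf _)
  obtain ⟨mOut, hmOut⟩ := nonfrac_sum i g ((univ.filter (fun e => G.src e = v)).filter
    (fun e => ¬ e ∈ Frac i g)) (hnf _)
  have hinS : inS G g v = (∑ e ∈ A, g e) + (mIn : ℚ) * i := by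
    rw [inS, ← Finset.sum_filter_add_sum_filter_not (univ.filter (fun e => G.tgt e = v))
      (fun e => e ∈ Frac i g), hfibT, hmIn]
  have houtS : outS G g v = (∑ e ∈ B, g e) + (mOut : ℚ) * i := by
    rw [outS, ← Finset.sum_filter_add_sum_filter_not (univ.filter (fun e => G.src e = v))
      (fun e => e ∈ Frac i g), hfibS, hmOut]
  have hnet := netAt hg hst v
  set κ : ℤ := if v = s then -(lam : ℤ) else if v = t then (lam : ℤ) else 0 with hκ
  -- fractional-edge facts
  have he1f := he1
  simp only [Frac, Finset.mem_filter, Finset.mem_univ, true_and] at he1f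
  have hpos : 0 < g e1 := lt_of_le_of_ne (hg.nonneg e1) (Ne.symm he1f.1)
  have hlti : g e1 < (i : ℚ) := lt_of_le_of_ne (hg.le e1) he1f.2
  have hipos : (0 : ℚ) < (i : ℚ) := by exact_mod_cast hi
  -- two cases
  have hcase : (A = {e1} ∧ B = ∅) ∨ (A = ∅ ∧ B = {e1}) := by
    rw [ha] at he1'
    by_cases heA : e1 ∈ A
    · left
      constructor
      · apply Finset.Subset.antisymm
        · rw [← ha]; exact Finset.subset_union_left
        · exact Finset.singleton_subset_iff.mpr heA
      · rcases Finset.subset_singleton_iff.mp (ha ▸ (Finset.subset_union_right : B ⊆ A ∪ B)) with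
          h0 | h0
        · exact h0
        · exfalso
          exact (Finset.disjoint_left.mp hdisj heA) (h0 ▸ Finset.mem_singleton_self e1)
    · right
      have heB : e1 ∈ B := by
        rcases Finset.mem_union.mp ((ha ▸ Finset.mem_singleton_self e1 : e1 ∈ A ∪ B)) with
          h0 | h0
        · exact absurd h0 heA
        · exact h0
      constructor
      · rcases Finset.subset_singleton_iff.mp (ha ▸ (Finset.subset_union_left : A ⊆ A ∪ B)) with
          h0 | h0
        · exact h0
        · exact absurd (h0 ▸ Finset.mem_singleton_self e1) heA
      · apply Finset.Subset.antisymm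
        · rw [← ha]; exact Finset.subset_union_right
        · exact Finset.singleton_subset_iff.mpr heB
  rcases hcase with ⟨hA1, hB1⟩ | ⟨hA1, hB1⟩
  · rw [hA1, Finset.sum_singleton] at hinS
    rw [hB1, Finset.sum_empty, zero_add] at houtS
    rw [hinS, houtS] at hnet
    have hgx : g e1 = ((κ + mOut - mIn : ℤ) : ℚ) * i := by push_cast; linarith
    have hX1 : (0 : ℚ) < ((κ + mOut - mIn : ℤ) : ℚ) := by nlinarith [hgx ▸ hpos]
    have hX2 : ((κ + mOut - mIn : ℤ) : ℚ) < 1 := by nlinarith [hgx ▸ hlti]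
    have hX1' : (0 : ℤ) < κ + mOut - mIn := by exact_mod_cast hX1
    have hX2' : (κ + mOut - mIn : ℤ) < 1 := by exact_mod_cast hX2
    omega
  · rw [hA1, Finset.sum_empty, zero_add] at hinS
    rw [hB1, Finset.sum_singleton] at houtS
    rw [hinS, houtS] at hnet
    have hgx : g e1 = ((mIn - mOut - κ : ℤ) : ℚ) * i := by push_cast; linarith
    have hX1 : (0 : ℚ) < ((mIn - mOut - κ : ℤ) : ℚ) := by nlinarith [hgx ▸ hpos]
    have hX2 : ((mIn - mOut - κ : ℤ) : ℚ) < 1 := by nlinarith [hgx ▸ hlti]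
    have hX1' : (0 : ℤ) < mIn - mOut - κ := by exact_mod_cast hX1
    have hX2' : (mIn - mOut - κ : ℤ) < 1 := by exact_mod_cast hX2
    omega

lemma push (hg : Valid G s t lam i h g) (d : E → ℚ)
    (hdne : ∃ e, d e ≠ 0) (hsupp : ∀ e, d e ≠ 0 → e ∈ Frac i g)
    (hcirc : ∀ v, inS G d v = outS G d v) :
    ∃ g', Valid G s t lam i h g' ∧ (Frac i g').card < (Frac i g).card := by
  classical
  set supp := univ.filter (fun e => d e ≠ 0) with hsuppdef
  have hsne : supp.Nonempty := by
    obtain ⟨e, he⟩ := hdne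
    exact ⟨e, Finset.mem_filter.mpr ⟨Finset.mem_univ _, he⟩⟩
  set hit : E → ℚ := fun e => if 0 < d e then ((i : ℚ) - g e) / d e else g e / (-(d e)) with hhit
  obtain ⟨e0, he0, hmin⟩ := Finset.exists_min_image supp hit hsne
  have hd0 : ∀ e ∈ supp, d e ≠ 0 := fun e he => (Finset.mem_filter.mp he).2
  have hfr : ∀ e ∈ supp, 0 < g e ∧ g e < (i : ℚ) := by
    intro e he
    have hfe := hsupp e (hd0 e he)
    simp only [Frac, Finset.mem_filter, Finset.mem_univ, true_and] at hfe
    exact ⟨lt_of_le_of_ne (hg.nonneg e) (Ne.symm hfe.1), lt_of_le_of_ne (hg.le e) hfe.2⟩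
  have hhitpos : ∀ e ∈ supp, 0 < hit e := by
    intro e he
    obtain ⟨h1, h2⟩ := hfr e he
    by_cases hp : 0 < d e
    · simp only [hhit, if_pos hp]
      exact div_pos (by linarith) hp
    · have hn : d e < 0 := lt_of_le_of_ne (not_lt.mp hp) (hd0 e he)
      simp only [hhit, if_neg hp]
      exact div_pos h1 (by linarith)
  set δ := hit e0 with hδ
  have hδpos : 0 < δ := hhitpos e0 he0
  set g' : E → ℚ := fun e => g e + δ * d e with hg'
  have hfix : ∀ e, d e = 0 → g' e = g e := by
    intro e he; simp [hg', he]
  have hup : ∀ e, 0 < d e → g e ≤ g' e ∧ g' e ≤ (i : ℚ) := by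
    intro e hp
    have he : e ∈ supp := Finset.mem_filter.mpr ⟨Finset.mem_univ _, ne_of_gt hp⟩
    have h1 : δ ≤ hit e := hmin e he
    have h2 : δ * d e ≤ ((i : ℚ) - g e) / d e * d e :=
      mul_le_mul_of_nonneg_right (by simpa only [hhit, if_pos hp] using h1) (le_of_lt hp)
    rw [div_mul_cancel₀ _ (ne_of_gt hp)] at h2
    constructor
    · simp only [hg']; nlinarith
    · simp only [hg']; linarith
  have hdown : ∀ e, d e < 0 → 0 ≤ g' e ∧ g' e ≤ g e := by
    intro e hn
    have he : e ∈ supp := Finset.mem_filter.mpr ⟨Finset.mem_univ _, ne_of_lt hn⟩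
    have h1 : δ ≤ hit e := hmin e he
    have h2 : g e / (-(d e)) * d e ≤ δ * d e :=
      mul_le_mul_of_nonpos_right (by simpa only [hhit, if_neg (not_lt.mpr (le_of_lt hn))] using h1)
        (le_of_lt hn)
    have h3 : g e / (-(d e)) * d e = -(g e) := by
      rw [div_mul_eq_mul_div, div_neg, mul_div_assoc, div_self (ne_of_lt hn), mul_one]
    rw [h3] at h2
    constructor
    · simp only [hg']; linarith
    · simp only [hg']; nlinarith
  have hbounds : ∀ e, 0 ≤ g' e ∧ g' e ≤ (i : ℚ) := by
    intro e
    rcases lt_trichotomy (d e) 0 with hn | h0 | hp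
    · obtain ⟨h1, h2⟩ := hdown e hn; exact ⟨h1, le_trans h2 (hg.le e)⟩
    · rw [hfix e h0]; exact ⟨hg.nonneg e, hg.le e⟩
    · obtain ⟨h1, h2⟩ := hup e hp; exact ⟨le_trans (hg.nonneg e) h1, h2⟩
  have hVal : Valid G s t lam i h g' := by
    refine ⟨fun e => (hbounds e).1, fun e => (hbounds e).2, ?_, ?_, ?_, ?_⟩
    · intro v hvs hvt
      rw [show g' = fun e => g e + δ * d e from rfl, inS_add, outS_add,
        hg.cons v hvs hvt, hcirc v]
    · rw [show g' = fun e => g e + δ * d e from rfl, inS_add, outS_add, hcirc s]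
      have := hg.val
      linarith
    · intro e he
      have hd : d e = 0 := by
        by_contra hd
        have := hsupp e hd
        simp only [Frac, Finset.mem_filter, Finset.mem_univ, true_and] at this
        exact this.1 (hg.zero e he)
      rw [hfix e hd, hg.zero e he]
    · intro e he
      have hd : d e = 0 := by
        by_contra hd
        have := hsupp e hd
        simp only [Frac, Finset.mem_filter, Finset.mem_univ, true_and] at this
        exact this.2 (hg.sat e he)
      rw [hfix e hd, hg.sat e he]
  refine ⟨g', hVal, ?_⟩
  have hsub : Frac i g' ⊆ Frac i g := by
    intro e he
    by_cases hd : d e = 0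
    · simp only [Frac, Finset.mem_filter, Finset.mem_univ, true_and] at he ⊢
      rwa [hfix e hd] at he
    · exact hsupp e hd
  apply Finset.card_lt_card
  rw [Finset.ssubset_iff_of_subset hsub]
  refine ⟨e0, hsupp e0 (hd0 e0 he0), ?_⟩
  simp only [Frac, Finset.mem_filter, Finset.mem_univ, true_and, not_and, not_not]
  intro hne0
  by_cases hp : 0 < d e0
  · have : g' e0 = (i : ℚ) := by
      simp only [hg', hδ, hhit, if_pos hp, div_mul_cancel₀ _ (ne_of_gt hp)]
      ring
    exact this
  · exfalso
    have hn : d e0 < 0 := lt_of_le_of_ne (not_lt.mp hp) (hd0 e0 he0)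
    have : g' e0 = 0 := by
      have h3 : g e0 / (-(d e0)) * d e0 = -(g e0) := by
        rw [div_mul_eq_mul_div, div_neg, mul_div_assoc, div_self (ne_of_lt hn), mul_one]
      simp only [hg', hδ, hhit, if_neg hp, h3]
      ring
    exact hne0 this

lemma exists_circulation (G : Digraph' V E) (F' : Finset E) (hne : F'.Nonempty)
    (hcard : (univ.filter (fun v => ∃ e ∈ F', G.src e = v ∨ G.tgt e = v)).card ≤ F'.card) :
    ∃ d : E → ℚ, (∃ e, d e ≠ 0) ∧ (∀ e, d e ≠ 0 → e ∈ F') ∧ ∀ v, inS G d v = outS G d v := by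
  classical
  set VF := univ.filter (fun v => ∃ e ∈ F', G.src e = v ∨ G.tgt e = v) with hVFdef
  obtain ⟨e0, he0⟩ := hne
  have hv0 : G.src e0 ∈ VF := by
    rw [hVFdef, Finset.mem_filter]
    exact ⟨Finset.mem_univ _, e0, he0, Or.inl rfl⟩
  set K := VF.erase (G.src e0) with hK
  have hKcard : K.card < F'.card := by
    have h1 : K.card = VF.card - 1 := Finset.card_erase_of_mem hv0
    have h2 : 0 < VF.card := Finset.card_pos.mpr ⟨_, hv0⟩
    omega
  let L : (↥F' → ℚ) →ₗ[ℚ] (↥K → ℚ) :=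
    { toFun := fun x v => ∑ e : ↥F',
        x e * ((if G.tgt e.1 = v.1 then (1 : ℚ) else 0) - (if G.src e.1 = v.1 then 1 else 0)),
      map_add' := by
        intro x y
        funext v
        simp [add_mul, Finset.sum_add_distrib]
      map_smul' := by
        intro c x
        funext v
        simp [Finset.mul_sum, mul_assoc] }
  have hnotinj : ¬ Function.Injective L := by
    intro hinj
    have hle := LinearMap.finrank_le_finrank_of_injective hinj
    rw [Module.finrank_pi, Module.finrank_pi, Fintype.card_coe, Fintype.card_coe] at hle
    exact absurd hle (not_le.mpr hKcard)
  rw [Function.not_injective_iff] at hnotinj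
  obtain ⟨x, y, hxy, hne2⟩ := hnotinj
  set z := x - y with hz
  have hz0 : z ≠ 0 := sub_ne_zero.mpr hne2
  have hLz : L z = 0 := by rw [hz, map_sub, hxy, sub_self]
  set d : E → ℚ := fun e => if he : e ∈ F' then z ⟨e, he⟩ else 0 with hd
  have hsupp : ∀ e, d e ≠ 0 → e ∈ F' := by
    intro e he
    by_contra hc
    exact he (by simp [hd, hc])
  have hdval : ∀ (e : E) (he : e ∈ F'), d e = z ⟨e, he⟩ := by
    intro e he; simp [hd, he]
  have hdne : ∃ e, d e ≠ 0 := by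
    by_contra hc
    push_neg at hc
    apply hz0
    funext e
    have := hc e.1
    rwa [hdval e.1 e.2, Subtype.coe_eta] at this
  refine ⟨d, hdne, hsupp, ?_⟩
  have hnet : ∀ v : V, inS G d v - outS G d v =
      ∑ e : ↥F', z e * ((if G.tgt e.1 = v then (1 : ℚ) else 0) - (if G.src e.1 = v then 1 else 0)) := by
    intro v
    have h1 : inS G d v - outS G d v
        = ∑ e, ((if G.tgt e = v then d e else 0) - (if G.src e = v then d e else 0)) := by
      rw [Finset.sum_sub_distrib]
      simp [inS, outS, Finset.sum_filter]
    rw [h1]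
    rw [← Finset.sum_subset (Finset.subset_univ F') (fun e _ he => by
      have hde : d e = 0 := by
        by_contra hc
        exact he (hsupp e hc)
      rw [hde]
      simp)]
    rw [← Finset.sum_attach F' (fun e => (if G.tgt e = v then d e else 0) - (if G.src e = v then d e else 0))]
    apply Finset.sum_congr rfl
    intro e _
    rw [hdval e.1 e.2, Subtype.coe_eta]
    split_ifs <;> ring
  have hzeroK : ∀ v (hvK : v ∈ K), inS G d v - outS G d v = 0 := by
    intro v hvK
    rw [hnet v]
    have := congrFun hLz ⟨v, hvK⟩
    simpa [L] using this
  have hzeroNF : ∀ v, v ∉ VF → inS G d v - outS G d v = 0 := by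
    intro v hv
    have hin : inS G d v = 0 := by
      apply Finset.sum_eq_zero
      intro e he
      rw [Finset.mem_filter] at he
      by_contra hc
      apply hv
      rw [hVFdef, Finset.mem_filter]
      exact ⟨Finset.mem_univ _, e, hsupp e hc, Or.inr he.2⟩
    have hout : outS G d v = 0 := by
      apply Finset.sum_eq_zero
      intro e he
      rw [Finset.mem_filter] at he
      by_contra hc
      apply hv
      rw [hVFdef, Finset.mem_filter]
      exact ⟨Finset.mem_univ _, e, hsupp e hc, Or.inl he.2⟩
    rw [hin, hout, sub_self]
  have hall : ∀ v, inS G d v - outS G d v = 0 := by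
    intro v
    by_cases hvK : v ∈ K
    · exact hzeroK v hvK
    by_cases hvVF : v ∈ VF
    · have hv : v = G.src e0 := by
        by_contra hc
        exact hvK (Finset.mem_erase.mpr ⟨hc, hvVF⟩)
      subst hv
      have h0 := sum_net G d
      rw [Finset.sum_eq_single_of_mem (G.src e0) (Finset.mem_univ _)] at h0
      · exact h0
      · intro b _ hb
        by_cases hbK : b ∈ K
        · exact hzeroK b hbK
        · apply hzeroNF
          intro hbVF
          exact hbK (Finset.mem_erase.mpr ⟨hb, hbVF⟩)
    · exact hzeroNF v hvVF
  intro v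
  have := hall v
  linarith

lemma descent (hst : s ≠ t) (hi : 1 ≤ i) :
    ∀ (n : ℕ) (g : E → ℚ), Valid G s t lam i h g → (Frac i g).card ≤ n →
      ∃ g', Valid G s t lam i h g' ∧ Frac i g' = ∅ := by
  intro n
  induction n with
  | zero =>
    intro g hg hc
    exact ⟨g, hg, Finset.card_eq_zero.mp (Nat.le_zero.mp hc)⟩
  | succ n ih =>
    intro g hg hc
    by_cases hemp : Frac i g = ∅
    · exact ⟨g, hg, hemp⟩
    have hFne : (Frac i g).Nonempty := Finset.nonempty_of_ne_empty hemp
    have hD : ∃ d : E → ℚ, (∃ e, d e ≠ 0) ∧ (∀ e, d e ≠ 0 → e ∈ Frac i g) ∧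
        ∀ v, inS G d v = outS G d v := by
      classical
      by_cases hloop : ∃ e0 ∈ Frac i g, G.src e0 = G.tgt e0
      · obtain ⟨e0, he0, hl⟩ := hloop
        refine ⟨fun e => if e = e0 then 1 else 0, ⟨e0, by simp⟩, ?_, ?_⟩
        · intro e he
          have : e = e0 := by
            by_contra hc'
            simp [hc'] at he
          exact this ▸ he0
        · intro v
          have h1 : inS G (fun e => if e = e0 then (1:ℚ) else 0) v
              = (if G.tgt e0 = v then (1:ℚ) else 0) := by
            rw [inS, Finset.sum_ite_eq' (univ.filter (fun e => G.tgt e = v)) e0 (fun _ => (1:ℚ))]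
            simp
          have h2 : outS G (fun e => if e = e0 then (1:ℚ) else 0) v
              = (if G.src e0 = v then (1:ℚ) else 0) := by
            rw [outS, Finset.sum_ite_eq' (univ.filter (fun e => G.src e = v)) e0 (fun _ => (1:ℚ))]
            simp
          rw [h1, h2, hl]
      · push_neg at hloop
        obtain ⟨e0, he0⟩ := hFne
        set Fr := Frac i g with hFr
        set Adj : V → V → Prop := fun u w =>
          ∃ e ∈ Fr, (G.src e = u ∧ G.tgt e = w) ∨ (G.src e = w ∧ G.tgt e = u) with hAdj
        set Reach : V → Prop := Relation.ReflTransGen Adj (G.src e0) with hReach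
        have hstep : ∀ e ∈ Fr, (Reach (G.src e) ↔ Reach (G.tgt e)) := by
          intro e he
          constructor
          · intro hr
            exact hr.tail ⟨e, he, Or.inl ⟨rfl, rfl⟩⟩
          · intro hr
            exact hr.tail ⟨e, he, Or.inr ⟨rfl, rfl⟩⟩
        set F' := Fr.filter (fun e => Reach (G.src e)) with hF'
        have hF'sub : F' ⊆ Fr := Finset.filter_subset _ _
        set VF := univ.filter (fun v => ∃ e ∈ F', G.src e = v ∨ G.tgt e = v) with hVFdef
        have hF'e0 : e0 ∈ F' := Finset.mem_filter.mpr ⟨he0, Relation.ReflTransGen.refl⟩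
        have hVFreach : ∀ v ∈ VF, Reach v := by
          intro v hv
          rw [hVFdef, Finset.mem_filter] at hv
          obtain ⟨-, e, heF, hor⟩ := hv
          have hr : Reach (G.src e) := (Finset.mem_filter.mp heF).2
          rcases hor with h1 | h1
          · exact h1 ▸ hr
          · exact h1 ▸ (hstep e (hF'sub heF)).mp hr
        have hedge : ∀ e ∈ Fr, ∀ v ∈ VF, (G.src e = v ∨ G.tgt e = v) → e ∈ F' := by
          intro e he v hv hor
          apply Finset.mem_filter.mpr
          refine ⟨he, ?_⟩
          rcases hor with h1 | h1
          · exact h1 ▸ hVFreach v hv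
          · exact (hstep e he).mpr (h1 ▸ hVFreach v hv)
        have hfibT : ∀ v ∈ VF, F'.filter (fun e => G.tgt e = v) = Fr.filter (fun e => G.tgt e = v) := by
          intro v hv
          apply Finset.Subset.antisymm
          · exact Finset.filter_subset_filter _ hF'sub
          · intro e he
            rw [Finset.mem_filter] at he ⊢
            exact ⟨hedge e he.1 v hv (Or.inr he.2), he.2⟩
        have hfibS : ∀ v ∈ VF, F'.filter (fun e => G.src e = v) = Fr.filter (fun e => G.src e = v) := by
          intro v hv
          apply Finset.Subset.antisymm
          · exact Finset.filter_subset_filter _ hF'sub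
          · intro e he
            rw [Finset.mem_filter] at he ⊢
            exact ⟨hedge e he.1 v hv (Or.inl he.2), he.2⟩
        have hdeg : ∀ v ∈ VF, 2 ≤ (F'.filter (fun e => G.tgt e = v)).card
            + (F'.filter (fun e => G.src e = v)).card := by
          intro v hv
          rw [hfibT v hv, hfibS v hv]
          have hv' := hv
          rw [hVFdef, Finset.mem_filter] at hv'
          obtain ⟨-, e1, he1, hor⟩ := hv'
          exact degree_two hg hst hi hloop v e1 (hF'sub he1) hor.symm
        have hzerofib : ∀ v, v ∉ VF →
            (F'.filter (fun e => G.tgt e = v)).card = 0 ∧ (F'.filter (fun e => G.src e = v)).card = 0 := by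
          intro v hv
          constructor <;>
          · rw [Finset.card_eq_zero, Finset.filter_eq_empty_iff]
            intro e he hc
            apply hv
            rw [hVFdef, Finset.mem_filter]
            first
            | exact ⟨Finset.mem_univ _, e, he, Or.inr hc⟩
            | exact ⟨Finset.mem_univ _, e, he, Or.inl hc⟩
        have hhs : 2 * F'.card = ∑ v, ((F'.filter (fun e => G.tgt e = v)).card
            + (F'.filter (fun e => G.src e = v)).card) := by
          rw [Finset.sum_add_distrib]
          rw [← Finset.card_eq_sum_card_fiberwise (fun (e : E) (_ : e ∈ F') => Finset.mem_univ (G.tgt e)),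
            ← Finset.card_eq_sum_card_fiberwise (fun (e : E) (_ : e ∈ F') => Finset.mem_univ (G.src e))]
          ring
        have hrestrict : ∑ v, ((F'.filter (fun e => G.tgt e = v)).card
            + (F'.filter (fun e => G.src e = v)).card)
            = ∑ v ∈ VF, ((F'.filter (fun e => G.tgt e = v)).card
            + (F'.filter (fun e => G.src e = v)).card) := by
          symm
          apply Finset.sum_subset (Finset.subset_univ _)
          intro v _ hv
          obtain ⟨h1, h2⟩ := hzerofib v hv
          omega
        have hlb : 2 * VF.card ≤ ∑ v ∈ VF, ((F'.filter (fun e => G.tgt e = v)).card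
            + (F'.filter (fun e => G.src e = v)).card) := by
          calc 2 * VF.card = ∑ _v ∈ VF, 2 := by rw [Finset.sum_const, smul_eq_mul]; ring
          _ ≤ _ := Finset.sum_le_sum hdeg
        have hcard : VF.card ≤ F'.card := by omega
        obtain ⟨d, hd1, hd2, hd3⟩ := exists_circulation G F' ⟨e0, hF'e0⟩ (by rw [← hVFdef]; exact hcard)
        exact ⟨d, hd1, fun e he => hF'sub (hd2 e he), hd3⟩
    obtain ⟨d, hd1, hd2, hd3⟩ := hD
    obtain ⟨g', hg', hlt⟩ := push hg d hd1 hd2 hd3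
    exact ih g' hg' (by omega)

end Stmt6Aux


/-- Let `i ≥ 1` and let `h : E → ℕ` be an integral flow of `G` of
value `λ·i` with `h e ≤ i` for every edge `e`. Then there is a maximum `(s,t)`-flow
`f` of `G` (a `{0,1}`-flow of value `λ`) with `f e = 0` whenever `h e = 0` and
`f e = 1` whenever `h e = i`. -/
theorem stmt6 {V E : Type} [Fintype V] [DecidableEq V] [Fintype E] [DecidableEq E]
    (G : Digraph' V E) (s t : V) (hst : s ≠ t) (lam : ℕ)
    (hmax : G.IsMaxFlowValue s t ∅ lam)
    (i : ℕ) (hi : 1 ≤ i) (h : E → ℕ) (hcons : G.Conserves s t h)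
    (hval : G.flowValue s h = lam * i) (hbd : ∀ e, h e ≤ i) :
    ∃ f : E → ℕ, G.IsFlow s t f ∧ G.flowValue s f = lam ∧
      (∀ e, h e = 0 → f e = 0) ∧ (∀ e, h e = i → f e = 1) := by
  classical
  have hipos : (0 : ℚ) < (i : ℚ) := by exact_mod_cast hi
  have hg0 : Stmt6Aux.Valid G s t lam i h (fun e => (h e : ℚ)) := by
    refine ⟨fun e => by positivity, fun e => by exact_mod_cast hbd e, ?_, ?_,
      fun e he => by exact_mod_cast he, fun e he => by exact_mod_cast he⟩
    · intro v hvs hvt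
      have := hcons v hvs hvt
      simp only [Stmt6Aux.inS, Stmt6Aux.outS]
      exact_mod_cast this
    · have := hval
      rw [Digraph'.flowValue] at this
      simp only [Stmt6Aux.inS, Stmt6Aux.outS]
      push_cast
      exact_mod_cast congrArg (fun z : ℤ => (z : ℚ)) this
  obtain ⟨g, hg, hFr⟩ := Stmt6Aux.descent hst hi (Stmt6Aux.Frac i (fun e => (h e : ℚ))).card
    (fun e => (h e : ℚ)) hg0 le_rfl
  have hbin : ∀ e, g e = 0 ∨ g e = (i : ℚ) := by
    intro e
    have : e ∉ Stmt6Aux.Frac i g := by rw [hFr]; exact Finset.notMem_empty e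
    simp only [Stmt6Aux.Frac, Finset.mem_filter, Finset.mem_univ, true_and, not_and, not_not] at this
    by_cases h0 : g e = 0
    · exact Or.inl h0
    · exact Or.inr (this h0)
  set f : E → ℕ := fun e => if g e = (i : ℚ) then 1 else 0 with hf
  have hkey : ∀ e, ((f e : ℚ)) * i = g e := by
    intro e
    rcases hbin e with h0 | h0
    · have : ¬ g e = (i : ℚ) := by rw [h0]; exact fun hc => by rw [← hc] at hipos; exact lt_irrefl _ hipos
      show ((if g e = (i : ℚ) then 1 else 0 : ℕ) : ℚ) * i = g e
      rw [if_neg this, h0]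
      simp
    · show ((if g e = (i : ℚ) then 1 else 0 : ℕ) : ℚ) * i = g e
      rw [if_pos h0, h0]
      simp
  have hcast : ∀ (S : Finset E), ∑ e ∈ S, g e = ((∑ e ∈ S, f e : ℕ) : ℚ) * i := by
    intro S
    rw [← Finset.sum_congr rfl (fun e _ => hkey e)]
    push_cast
    rw [Finset.sum_mul]
  refine ⟨f, ⟨fun e => by simp only [hf]; split <;> omega, ?_⟩, ?_, ?_, ?_⟩
  · intro v hvs hvt
    have := hg.cons v hvs hvt
    rw [Stmt6Aux.inS, Stmt6Aux.outS, hcast, hcast] at this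
    have h2 := mul_right_cancel₀ (ne_of_gt hipos) this
    exact_mod_cast h2
  · have := hg.val
    rw [Stmt6Aux.inS, Stmt6Aux.outS, hcast, hcast] at this
    have h2 : ((∑ e ∈ univ.filter (fun e => G.src e = s), f e : ℕ) : ℚ)
        - ((∑ e ∈ univ.filter (fun e => G.tgt e = s), f e : ℕ) : ℚ) = (lam : ℚ) := by
      have h3 : (((∑ e ∈ univ.filter (fun e => G.src e = s), f e : ℕ) : ℚ)
          - ((∑ e ∈ univ.filter (fun e => G.tgt e = s), f e : ℕ) : ℚ)) * i = (lam : ℚ) * i := by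
        rw [sub_mul]; linarith
      exact mul_right_cancel₀ (ne_of_gt hipos) h3
    rw [Digraph'.flowValue]
    have h4 : ((((∑ e ∈ univ.filter (fun e => G.src e = s), (f e : ℤ))
        - ∑ e ∈ univ.filter (fun e => G.tgt e = s), (f e : ℤ)) : ℤ) : ℚ) = ((lam : ℤ) : ℚ) := by
      push_cast
      push_cast at h2
      linarith
    exact_mod_cast h4
  · intro e he
    have h0 := hg.zero e he
    simp only [hf]
    rw [if_neg]
    rw [h0]
    exact fun hc => by rw [← hc] at hipos; exact lt_irrefl _ hipos
  · intro e he
    have h0 := hg.sat e he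
    simp only [hf]
    rw [if_pos h0]
end

section
/- Let f : E → ℕ be an integral flow of G of value λ(λ + 1) satisfying f(e) ≤ λ + 1 for every critical edge e and f(e) ≤ λ for every non-critical edge e. Then there exist λ + 1 maximum (s,t)-flows f_1, …, f_{λ+1} of G (each f_j : E → {0,1} of value λ) such that f(e) = f_1(e) + f_2(e) + ⋯ + f_{λ+1}(e) for every edge e ∈ E. -/
open Finset

/-!
Adding `λ(λ+1)` return edges from `t` to `s` turns `f` into a circulation `h` bounded by
`k = λ + 1`. Such a circulation is a sum of `k` circulations with values in `{0, 1}`: it suffices to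
peel off one that is `1` wherever `h = k` and `0` wherever `h = 0`. That one is obtained by rounding
`h / k`: edges with `0 < h < k` never occur alone at a vertex (count modulo `k`), so they contain a
cycle, and pushing `h` one unit around it in the right direction lowers `∑ h (k - h)` until `h`
only takes the values `0` and `k`. The resulting `λ + 1` unit flows have value at most `λ` each
and total value `λ(λ+1)`, so each is a maximum flow.
-/

theorem exists_seq_of_forall_exists {α : Type*} {p : α → Prop} {r : α → α → Prop}
    (h : ∀ x, p x → ∃ y, p y ∧ r x y) (h₀ : ∃ x, p x) :
    ∃ u : ℕ → α, ∀ n, p (u n) ∧ r (u n) (u (n + 1)) := by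
  obtain ⟨x₀, hx₀⟩ := h₀
  choose next hnext using fun x : {x // p x} => h x.1 x.2
  let step : {x // p x} → {x // p x} := fun x => ⟨next x, (hnext x).1⟩
  refine ⟨fun n => (step^[n] ⟨x₀, hx₀⟩).1, fun n => ⟨(step^[n] _).2, ?_⟩⟩
  simp only [Function.iterate_succ_apply']
  exact (hnext _).2

theorem exists_lt_eq_injOn_Iio {α : Type*} [Finite α] (p : ℕ → α) :
    ∃ i j, i < j ∧ p i = p j ∧ Set.InjOn p (Set.Iio j) := by
  classical
  have hrep : ∃ j, ∃ i < j, p i = p j := by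
    obtain ⟨a, b, hab, heq⟩ := Finite.exists_ne_map_eq_of_infinite p
    rcases hab.lt_or_gt with h | h
    exacts [⟨b, a, h, heq⟩, ⟨a, b, h, heq.symm⟩]
  obtain ⟨i, hi, heq⟩ := Nat.find_spec hrep
  refine ⟨i, _, hi, heq, Set.injOn_iff_pairwise_ne.2 fun a ha b hb hab hpab => ?_⟩
  rcases hab.lt_or_gt with h | h
  exacts [Nat.find_min hrep hb ⟨a, h, hpab⟩, Nat.find_min hrep ha ⟨b, h, hpab.symm⟩]

namespace Digraph'

section Circulation

variable {V E : Type} [DecidableEq V] [Fintype E] (G : Digraph' V E) {M N : Type*}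
  [AddCommMonoid M] [AddCommMonoid N]

def inflow (h : E → M) (v : V) : M := ∑ e ∈ univ.filter (fun e => G.tgt e = v), h e

def outflow (h : E → M) (v : V) : M := ∑ e ∈ univ.filter (fun e => G.src e = v), h e

def IsCirculation (h : E → M) : Prop := ∀ v, G.inflow h v = G.outflow h v

theorem inflow_add (h h' : E → M) (v : V) :
    G.inflow (h + h') v = G.inflow h v + G.inflow h' v :=
  sum_add_distrib

theorem outflow_add (h h' : E → M) (v : V) :
    G.outflow (h + h') v = G.outflow h v + G.outflow h' v :=
  sum_add_distrib

theorem inflow_sum {ι : Type*} (s : Finset ι) (h : ι → E → M) (v : V) :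
    G.inflow (∑ i ∈ s, h i) v = ∑ i ∈ s, G.inflow (h i) v := by
  simp only [inflow, Finset.sum_apply]
  exact sum_comm

theorem outflow_sum {ι : Type*} (s : Finset ι) (h : ι → E → M) (v : V) :
    G.outflow (∑ i ∈ s, h i) v = ∑ i ∈ s, G.outflow (h i) v := by
  simp only [outflow, Finset.sum_apply]
  exact sum_comm

theorem inflow_single [DecidableEq E] (e : E) (c : M) (v : V) :
    G.inflow (Pi.single e c) v = if G.tgt e = v then c else 0 := by
  simp [inflow, Finset.sum_pi_single']

theorem outflow_single [DecidableEq E] (e : E) (c : M) (v : V) :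
    G.outflow (Pi.single e c) v = if G.src e = v then c else 0 := by
  simp [outflow, Finset.sum_pi_single']

theorem sum_inflow [Fintype V] (h : E → M) : ∑ v, G.inflow h v = ∑ e, h e :=
  sum_fiberwise univ G.tgt h

theorem sum_outflow [Fintype V] (h : E → M) : ∑ v, G.outflow h v = ∑ e, h e :=
  sum_fiberwise univ G.src h

variable {G}

theorem IsCirculation.add {h h' : E → M} (hc : G.IsCirculation h) (hc' : G.IsCirculation h') :
    G.IsCirculation (h + h') := fun v => by
  rw [inflow_add, outflow_add, hc v, hc' v]

theorem IsCirculation.neg {σ : E → ℤ} (hc : G.IsCirculation σ) : G.IsCirculation (-σ) := fun v => by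
  simpa only [inflow, outflow, Pi.neg_apply, sum_neg_distrib, neg_inj] using hc v

theorem IsCirculation.tsub {h h' : E → ℕ} (hc : G.IsCirculation h) (hc' : G.IsCirculation h')
    (hle : h' ≤ h) : G.IsCirculation (h - h') := fun v => by
  simp only [inflow, outflow, Pi.sub_apply]
  rw [sum_tsub_distrib _ fun e _ => hle e, sum_tsub_distrib _ fun e _ => hle e]
  exact congrArg₂ _ (hc v) (hc' v)

theorem IsCirculation.map {h : E → M} (hc : G.IsCirculation h) (φ : M →+ N) :
    G.IsCirculation (φ ∘ h) := fun v => by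
  simpa only [inflow, outflow, Function.comp_apply, map_sum] using congrArg φ (hc v)

theorem isCirculation_comp_iff {h : E → M} {φ : M →+ N} (hφ : Function.Injective φ) :
    G.IsCirculation (φ ∘ h) ↔ G.IsCirculation h := by
  refine ⟨fun hc v => hφ ?_, fun hc => hc.map φ⟩
  simpa only [inflow, outflow, Function.comp_apply, map_sum] using hc v

theorem IsCirculation.of_nsmul {h : E → ℕ} {k : ℕ} (hc : G.IsCirculation (k • h)) (hk : k ≠ 0) :
    G.IsCirculation h := fun v => by
  have := hc v
  simp only [inflow, outflow, Pi.smul_apply, smul_eq_mul, ← mul_sum] at this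
  exact Nat.eq_of_mul_eq_mul_left (Nat.pos_of_ne_zero hk) this

theorem isCirculation_single_of_src_eq_tgt [DecidableEq E] {e : E} (he : G.src e = G.tgt e)
    (c : M) : G.IsCirculation (Pi.single e c) := fun v => by
  rw [inflow_single, outflow_single, he]

theorem IsCirculation.eq_zero_of_forall_ne_incident {h : E → M} (hc : G.IsCirculation h)
    {e₀ : E} (he₀ : G.src e₀ ≠ G.tgt e₀) {v : V} (hv : G.src e₀ = v ∨ G.tgt e₀ = v)
    (hzero : ∀ e ≠ e₀, (G.src e = v ∨ G.tgt e = v) → h e = 0) : h e₀ = 0 := by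
  have hflow : ∀ dir : E → V, (dir = G.src ∨ dir = G.tgt) →
      ∑ e ∈ univ.filter (fun e => dir e = v), h e = if dir e₀ = v then h e₀ else 0 := by
    rintro dir hdir
    split_ifs with hd
    · refine sum_eq_single_of_mem e₀ (by simpa using hd) fun e he hne => hzero e hne ?_
      rcases hdir with rfl | rfl <;> simp_all
    · refine sum_eq_zero fun e he => hzero e (by rintro rfl; simp_all) ?_
      rcases hdir with rfl | rfl <;> simp_all
  have hbal := hc v
  rw [inflow, outflow, hflow _ (Or.inr rfl), hflow _ (Or.inl rfl)] at hbal
  rcases hv with hv | hv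
  · simpa [hv, show G.tgt e₀ ≠ v from hv ▸ he₀.symm] using hbal.symm
  · simpa [hv, show G.src e₀ ≠ v from hv ▸ he₀] using hbal

end Circulation

section Darts

variable {V E : Type} (G : Digraph' V E)

/-- A dart `(e, true)` traverses `e` forwards, `(e, false)` backwards. -/
def dartStart (d : E × Bool) : V := if d.2 then G.src d.1 else G.tgt d.1

def dartEnd (d : E × Bool) : V := if d.2 then G.tgt d.1 else G.src d.1

theorem dartStart_eq_or_eq_dartEnd {d d' : E × Bool} (h : d.1 = d'.1) :
    G.dartStart d' = G.dartStart d ∨ G.dartStart d' = G.dartEnd d := by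
  obtain ⟨e, b⟩ := d
  obtain ⟨e', b'⟩ := d'
  obtain rfl : e = e' := h
  cases b <;> cases b' <;> simp [dartStart, dartEnd]

theorem exists_dartStart_eq {e : E} {v : V} (h : G.src e = v ∨ G.tgt e = v) :
    ∃ b, G.dartStart (e, b) = v := by
  rcases h with h | h
  exacts [⟨true, h⟩, ⟨false, h⟩]

theorem dartEnd_incident (d : E × Bool) : G.src d.1 = G.dartEnd d ∨ G.tgt d.1 = G.dartEnd d := by
  obtain ⟨e, b⟩ := d
  cases b <;> simp [dartEnd]

variable {G}

theorem injOn_fst_of_injOn_dartStart {u : ℕ → E × Bool} {j : ℕ}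
    (hu : ∀ l, (u (l + 1)).1 ≠ (u l).1 ∧ G.dartEnd (u l) = G.dartStart (u (l + 1)))
    (hinj : Set.InjOn (fun l => G.dartStart (u l)) (Set.Iio j)) :
    Set.InjOn (fun l => (u l).1) (Set.Iio j) := by
  suffices key : ∀ l l', l < l' → l' < j → (u l).1 ≠ (u l').1 by
    refine Set.injOn_iff_pairwise_ne.2 fun a ha b hb hab => ?_
    rcases hab.lt_or_gt with h | h
    exacts [key a b h hb, (key b a h ha).symm]
  intro l l' hll' hl' heq
  rcases G.dartStart_eq_or_eq_dartEnd heq with h | h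
  · exact hll'.ne (hinj (hll'.trans hl') hl' h.symm)
  · rw [(hu l).2] at h
    rcases (Nat.succ_le_of_lt hll').eq_or_lt with h' | h'
    · subst h'
      exact (hu l).1 heq.symm
    · exact h'.ne (hinj (h'.trans hl') hl' h.symm)

def dartVector [DecidableEq E] (d : E × Bool) : E → ℤ := Pi.single d.1 (if d.2 then 1 else -1)

theorem sum_dartVector_apply_of_injOn [DecidableEq E] {w : ℕ → E × Bool} {m l₀ : ℕ}
    (hinj : Set.InjOn (fun l => (w l).1) (Set.Iio m)) (hl₀ : l₀ < m) :
    (∑ l ∈ range m, dartVector (w l)) (w l₀).1 = if (w l₀).2 then 1 else -1 := by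
  rw [Finset.sum_apply, sum_eq_single_of_mem l₀ (mem_range.2 hl₀)]
  · simp [dartVector]
  · intro l hl hne
    exact Pi.single_eq_of_ne (fun h => hne (hinj hl₀ (mem_range.1 hl) h).symm) _

theorem exists_closed_trail [Fintype V] {S : Finset E} (hS : S.Nonempty)
    (hdeg : ∀ e ∈ S, ∀ v, (G.src e = v ∨ G.tgt e = v) →
      ∃ e' ∈ S, e' ≠ e ∧ (G.src e' = v ∨ G.tgt e' = v)) :
    ∃ (w : ℕ → E × Bool) (m : ℕ), 0 < m ∧ (∀ l, (w l).1 ∈ S) ∧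
      (∀ l, G.dartEnd (w l) = G.dartStart (w (l + 1))) ∧
      G.dartStart (w m) = G.dartStart (w 0) ∧ Set.InjOn (fun l => (w l).1) (Set.Iio m) := by
  obtain ⟨e₀, he₀⟩ := hS
  have hnext : ∀ d : E × Bool, d.1 ∈ S →
      ∃ d' : E × Bool, d'.1 ∈ S ∧ (d'.1 ≠ d.1 ∧ G.dartEnd d = G.dartStart d') := by
    intro d hd
    obtain ⟨e', he', hne, hinc⟩ := hdeg d.1 hd _ (G.dartEnd_incident d)
    obtain ⟨b, hb⟩ := G.exists_dartStart_eq hinc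
    exact ⟨(e', b), he', hne, hb.symm⟩
  obtain ⟨u, hu⟩ := exists_seq_of_forall_exists hnext ⟨(e₀, true), he₀⟩
  obtain ⟨i, j, hij, hrep, hinj⟩ := exists_lt_eq_injOn_Iio fun l => G.dartStart (u l)
  have hinjE := injOn_fst_of_injOn_dartStart (fun l => (hu l).2) hinj
  refine ⟨fun l => u (i + l), j - i, Nat.sub_pos_of_lt hij, fun l => (hu _).1,
    fun l => (hu _).2.2, ?_, ?_⟩
  · simp only [Nat.add_sub_cancel' hij.le, add_zero, hrep]
  · intro a ha b hb hab
    have := hinjE (Nat.add_lt_of_lt_sub' ha) (Nat.add_lt_of_lt_sub' hb) hab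
    exact Nat.add_left_cancel this

end Darts

section SignedCycles

variable {V E : Type} [DecidableEq V] [Fintype E] [DecidableEq E] {G : Digraph' V E}

theorem inflow_sub_outflow_dartVector (d : E × Bool) (v : V) :
    G.inflow (dartVector d) v - G.outflow (dartVector d) v =
      (if G.dartEnd d = v then 1 else 0) - if G.dartStart d = v then 1 else 0 := by
  obtain ⟨e, b⟩ := d
  cases b <;> simp only [dartVector, inflow_single, outflow_single, dartStart, dartEnd] <;>
    split_ifs <;> simp

theorem isCirculation_sum_dartVector {w : ℕ → E × Bool} {m : ℕ}
    (hw : ∀ l, G.dartEnd (w l) = G.dartStart (w (l + 1)))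
    (hclosed : G.dartStart (w m) = G.dartStart (w 0)) :
    G.IsCirculation (∑ l ∈ range m, dartVector (w l)) := fun v => by
  rw [← sub_eq_zero, inflow_sum, outflow_sum, ← sum_sub_distrib]
  simp only [inflow_sub_outflow_dartVector, hw]
  rw [sum_range_sub (fun l => if G.dartStart (w l) = v then (1 : ℤ) else 0), hclosed, sub_self]

theorem exists_signed_cycle [Fintype V] {S : Finset E} (hS : S.Nonempty)
    (hdeg : ∀ e ∈ S, ∀ v, (G.src e = v ∨ G.tgt e = v) →
      ∃ e' ∈ S, e' ≠ e ∧ (G.src e' = v ∨ G.tgt e' = v)) :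
    ∃ σ : E → ℤ, G.IsCirculation σ ∧ (∀ e, |σ e| ≤ 1) ∧ (∀ e ∉ S, σ e = 0) ∧ σ ≠ 0 := by
  obtain ⟨w, m, hm, hwS, hw, hclosed, hinj⟩ := exists_closed_trail hS hdeg
  have hzero : ∀ e, (∀ l < m, (w l).1 ≠ e) → (∑ l ∈ range m, dartVector (w l)) e = 0 := by
    intro e he
    rw [Finset.sum_apply]
    exact sum_eq_zero fun l hl => Pi.single_eq_of_ne (he l (mem_range.1 hl)).symm _
  refine ⟨_, isCirculation_sum_dartVector hw hclosed, fun e => ?_, fun e he => hzero e ?_, ?_⟩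
  · by_cases he : ∃ l < m, (w l).1 = e
    · obtain ⟨l, hl, rfl⟩ := he
      rw [sum_dartVector_apply_of_injOn hinj hl]
      split_ifs <;> simp
    · simp [hzero e fun l hl h => he ⟨l, hl, h⟩]
  · exact fun l _ hl => he (hl ▸ hwS l)
  · intro h
    have hw₀ := sum_dartVector_apply_of_injOn hinj hm
    revert hw₀
    rw [h, Pi.zero_apply]
    split_ifs <;> simp

end SignedCycles

section Rounding

variable {V E : Type} [DecidableEq V] [Fintype E] {G : Digraph' V E}

/-- Modulo `k` the edges with value `0` or `k` vanish, so a lone edge with value in `(0, k)` at `v`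
would have to vanish modulo `k` as well. -/
theorem IsCirculation.exists_ne_incident_mem_Ioo {k : ℕ} {h : E → ℤ} (hc : G.IsCirculation h)
    (hb : ∀ e, 0 ≤ h e ∧ h e ≤ k) {e₀ : E} (he₀ : h e₀ ∈ Set.Ioo (0 : ℤ) k)
    (hloop : G.src e₀ ≠ G.tgt e₀) {v : V} (hv : G.src e₀ = v ∨ G.tgt e₀ = v) :
    ∃ e ∈ univ.filter (fun e => h e ∈ Set.Ioo (0 : ℤ) k), e ≠ e₀ ∧ (G.src e = v ∨ G.tgt e = v) := by
  by_contra hnone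
  have hmod : (h e₀ : ZMod k) = 0 := by
    refine (hc.map (Int.castAddHom (ZMod k))).eq_zero_of_forall_ne_incident hloop hv
      fun e hne hinc => ?_
    have hext : h e = 0 ∨ h e = k := by
      by_contra hmid
      have := hb e
      exact hnone ⟨e, by simp only [mem_filter, mem_univ, true_and, Set.mem_Ioo]; omega, hne, hinc⟩
    rcases hext with he | he <;> simp [he]
  rw [ZMod.intCast_zmod_eq_zero_iff_dvd] at hmod
  exact he₀.1.ne' (Int.eq_zero_of_dvd_of_nonneg_of_lt he₀.1.le he₀.2 hmod)

theorem IsCirculation.exists_signed_cycle_of_mem_Ioo [Fintype V] [DecidableEq E] {k : ℕ}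
    {h : E → ℤ} (hc : G.IsCirculation h) (hb : ∀ e, 0 ≤ h e ∧ h e ≤ k)
    (hmid : ∃ e, h e ∈ Set.Ioo (0 : ℤ) k) :
    ∃ σ : E → ℤ, G.IsCirculation σ ∧ (∀ e, |σ e| ≤ 1) ∧
      (∀ e, h e ∉ Set.Ioo (0 : ℤ) k → σ e = 0) ∧ σ ≠ 0 := by
  by_cases hloop : ∃ e, h e ∈ Set.Ioo (0 : ℤ) k ∧ G.src e = G.tgt e
  · obtain ⟨e, he, hloop⟩ := hloop
    refine ⟨Pi.single e 1, isCirculation_single_of_src_eq_tgt hloop 1, fun e' => ?_,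
      fun e' he' => Pi.single_eq_of_ne (by rintro rfl; exact he' he) _, by simp⟩
    by_cases he' : e' = e <;> simp [he']
  · obtain ⟨σ, hσ, hσ1, hσS, hσ0⟩ := exists_signed_cycle (G := G)
      (S := univ.filter fun e => h e ∈ Set.Ioo (0 : ℤ) k)
      (by simpa [filter_nonempty_iff] using hmid)
      fun e he v hv => hc.exists_ne_incident_mem_Ioo hb (by simpa using he)
        (fun h' => hloop ⟨e, by simpa using he, h'⟩) hv
    exact ⟨σ, hσ, hσ1, fun e he => hσS e (by simpa using he), hσ0⟩

/-- For `0 ≤ h ≤ k`, this vanishes exactly when `h` takes only the values `0` and `k`. -/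
def binaryDefect (k : ℤ) (h : E → ℤ) : ℤ := ∑ e, h e * (k - h e)

theorem binaryDefect_nonneg {k : ℤ} {h : E → ℤ} (hb : ∀ e, 0 ≤ h e ∧ h e ≤ k) :
    0 ≤ binaryDefect k h :=
  sum_nonneg fun e _ => mul_nonneg (hb e).1 (sub_nonneg.2 (hb e).2)

theorem binaryDefect_add_add_binaryDefect_add_neg (k : ℤ) (h σ : E → ℤ) :
    binaryDefect k (h + σ) + binaryDefect k (h + -σ) = 2 * binaryDefect k h - 2 * ∑ e, σ e ^ 2 := by
  simp only [binaryDefect, Pi.add_apply, Pi.neg_apply, ← sum_add_distrib, mul_sum,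
    ← sum_sub_distrib]
  exact sum_congr rfl fun e _ => by ring

/-- The defect is concave along `σ`, so pushing `h` one way or the other around a signed cycle
lowers it. -/
theorem IsCirculation.exists_binaryDefect_lt [Fintype V] [DecidableEq E] {k : ℕ} {h : E → ℤ}
    (hc : G.IsCirculation h) (hb : ∀ e, 0 ≤ h e ∧ h e ≤ k) (hmid : ∃ e, h e ∈ Set.Ioo (0 : ℤ) k) :
    ∃ τ : E → ℤ, G.IsCirculation τ ∧ (∀ e, h e ∉ Set.Ioo (0 : ℤ) k → τ e = 0) ∧
      (∀ e, 0 ≤ (h + τ) e ∧ (h + τ) e ≤ k) ∧ binaryDefect k (h + τ) < binaryDefect k h := by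
  obtain ⟨σ, hσ, hσ1, hσ0, hσne⟩ := hc.exists_signed_cycle_of_mem_Ioo hb hmid
  have hbound : ∀ τ : E → ℤ, (∀ e, |τ e| ≤ 1) → (∀ e, h e ∉ Set.Ioo (0 : ℤ) k → τ e = 0) →
      ∀ e, 0 ≤ (h + τ) e ∧ (h + τ) e ≤ k := by
    intro τ hτ1 hτ0 e
    rw [Pi.add_apply]
    by_cases he : h e ∈ Set.Ioo (0 : ℤ) k
    · have := abs_le.1 (hτ1 e)
      rw [Set.mem_Ioo] at he
      omega
    · rw [hτ0 e he, add_zero]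
      exact hb e
  have hsq : 0 < ∑ e, σ e ^ 2 := by
    obtain ⟨e, he⟩ := Function.ne_iff.1 hσne
    exact sum_pos' (fun e _ => sq_nonneg _) ⟨e, mem_univ e, sq_pos_of_ne_zero he⟩
  have hsum := binaryDefect_add_add_binaryDefect_add_neg k h σ
  by_cases hlt : binaryDefect k (h + σ) < binaryDefect k h
  · exact ⟨σ, hσ, hσ0, hbound σ hσ1 hσ0, hlt⟩
  · have hσ0' : ∀ e, h e ∉ Set.Ioo (0 : ℤ) k → (-σ) e = 0 := fun e he => by simp [hσ0 e he]
    exact ⟨-σ, hσ.neg, hσ0', hbound _ (fun e => by simpa using hσ1 e) hσ0', by linarith⟩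

theorem IsCirculation.exists_zero_or_eq [Fintype V] [DecidableEq E] {k : ℕ} {h : E → ℤ}
    (hc : G.IsCirculation h) (hb : ∀ e, 0 ≤ h e ∧ h e ≤ k) :
    ∃ h' : E → ℤ, G.IsCirculation h' ∧ (∀ e, h' e = 0 ∨ h' e = k) ∧
      ∀ e, h e ∉ Set.Ioo (0 : ℤ) k → h' e = h e := by
  induction hn : (binaryDefect k h).toNat using Nat.strong_induction_on generalizing h with
  | _ n ih =>
  by_cases hmid : ∃ e, h e ∈ Set.Ioo (0 : ℤ) k
  · obtain ⟨τ, hτ, hτ0, hb', hlt⟩ := hc.exists_binaryDefect_lt hb hmid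
    have hn' : (binaryDefect k (h + τ)).toNat < n :=
      hn ▸ (Int.toNat_lt_toNat ((binaryDefect_nonneg hb').trans_lt hlt)).2 hlt
    obtain ⟨h', hc', hh', hagree⟩ := ih _ hn' (hc.add hτ) hb' rfl
    refine ⟨h', hc', hh', fun e he => ?_⟩
    have hτe : (h + τ) e = h e := by rw [Pi.add_apply, hτ0 e he, add_zero]
    rw [hagree e (hτe ▸ he), hτe]
  · refine ⟨h, hc, fun e => ?_, fun _ _ => rfl⟩
    have := hb e
    have : h e ∉ Set.Ioo (0 : ℤ) k := fun he => hmid ⟨e, he⟩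
    rw [Set.mem_Ioo] at this
    omega

theorem IsCirculation.exists_binary_le [Fintype V] [DecidableEq E] {k : ℕ} (hk : 0 < k)
    {h : E → ℕ} (hc : G.IsCirculation h) (hb : ∀ e, h e ≤ k) :
    ∃ g : E → ℕ, G.IsCirculation g ∧ (∀ e, g e ≤ 1) ∧ g ≤ h ∧ ∀ e, h e = k → g e = 1 := by
  obtain ⟨h', hc', hh', hagree⟩ :=
    (hc.map (Nat.castAddMonoidHom ℤ)).exists_zero_or_eq (k := k) fun e => by simp [hb e]
  have hagree' : ∀ e, (h e = 0 ∨ h e = k) → h' e = h e := fun e he => hagree e <| by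
    rcases he with he | he <;> simp [he]
  have hk' : (k : ℤ) ≠ 0 := by exact_mod_cast hk.ne'
  refine ⟨fun e => if h' e = k then 1 else 0, ?_, fun e => by dsimp only; split_ifs <;> simp,
    fun e => ?_, fun e he => by simp [hagree' e (Or.inr he), he]⟩
  · refine IsCirculation.of_nsmul (k := k) ?_ hk.ne'
    rw [← isCirculation_comp_iff (φ := Nat.castAddMonoidHom ℤ) Nat.cast_injective]
    convert hc' using 1
    funext e
    rcases hh' e with he | he <;> simp [he, hk'.symm]
  · rcases Nat.eq_zero_or_pos (h e) with he | he
    · simp [hagree' e (Or.inl he), he, hk'.symm]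
    · dsimp only
      split_ifs <;> omega

theorem IsCirculation.exists_eq_sum_binary [Fintype V] [DecidableEq E] {k : ℕ} {h : E → ℕ}
    (hc : G.IsCirculation h) (hb : ∀ e, h e ≤ k) :
    ∃ g : Fin k → E → ℕ, (∀ j, G.IsCirculation (g j)) ∧ (∀ j e, g j e ≤ 1) ∧ h = ∑ j, g j := by
  induction k generalizing h with
  | zero =>
    exact ⟨Fin.elim0, fun j => j.elim0, fun j => j.elim0, funext fun e => by simpa using hb e⟩
  | succ k ih =>
    obtain ⟨g₀, hg₀, hg₀1, hg₀h, hg₀k⟩ := hc.exists_binary_le k.succ_pos hb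
    obtain ⟨g, hg, hg1, hsum⟩ := ih (hc.tsub hg₀ hg₀h) fun e => by
      have := hb e
      by_cases he : h e = k + 1
      · simp [he, hg₀k e he]
      · simp only [Pi.sub_apply]
        omega
    refine ⟨Fin.cons g₀ g, Fin.cases hg₀ hg, Fin.cases hg₀1 hg1, ?_⟩
    rw [Fin.sum_univ_succ, Fin.cons_zero]
    simp only [Fin.cons_succ, ← hsum]
    funext e
    exact (Nat.add_sub_cancel' (hg₀h e)).symm

end Rounding

section Flows

variable {V E : Type} [DecidableEq V] [Fintype E] (G : Digraph' V E) (s t : V)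

def withReturnEdges (N : ℕ) : Digraph' V (E ⊕ Fin N) where
  src := Sum.elim G.src fun _ => t
  tgt := Sum.elim G.tgt fun _ => s

theorem inflow_withReturnEdges {N : ℕ} {M : Type*} [AddCommMonoid M] (h : E ⊕ Fin N → M)
    (v : V) : (G.withReturnEdges s t N).inflow h v =
      G.inflow (h ∘ Sum.inl) v + if s = v then ∑ j, h (Sum.inr j) else 0 := by
  rw [inflow, inflow, sum_filter, sum_filter, Fintype.sum_sum_type]
  congr 1
  exact (sum_ite_irrel (s = v) univ (fun j => h (Sum.inr j)) fun _ => 0).trans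
    (by rw [sum_const_zero])

theorem outflow_withReturnEdges {N : ℕ} {M : Type*} [AddCommMonoid M] (h : E ⊕ Fin N → M)
    (v : V) : (G.withReturnEdges s t N).outflow h v =
      G.outflow (h ∘ Sum.inl) v + if t = v then ∑ j, h (Sum.inr j) else 0 := by
  rw [outflow, outflow, sum_filter, sum_filter, Fintype.sum_sum_type]
  congr 1
  exact (sum_ite_irrel (t = v) univ (fun j => h (Sum.inr j)) fun _ => 0).trans
    (by rw [sum_const_zero])

theorem flowValue_eq_outflow_sub_inflow (h : E → ℕ) :
    G.flowValue s h = ((G.outflow h s : ℕ) : ℤ) - (G.inflow h s : ℕ) := by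
  simp [flowValue, outflow, inflow]

theorem flowValue_sum {ι : Type*} (S : Finset ι) (F : ι → E → ℕ) :
    G.flowValue s (∑ i ∈ S, F i) = ∑ i ∈ S, G.flowValue s (F i) := by
  simp only [flowValue_eq_outflow_sub_inflow, outflow_sum, inflow_sum, Nat.cast_sum,
    sum_sub_distrib]

variable {G s t}

theorem IsCirculation.conserves_comp_inl {N : ℕ} {g : E ⊕ Fin N → ℕ}
    (hc : (G.withReturnEdges s t N).IsCirculation g) : G.Conserves s t (g ∘ Sum.inl) := by
  intro v hs ht
  have := hc v
  rwa [inflow_withReturnEdges, outflow_withReturnEdges, if_neg (Ne.symm hs), if_neg (Ne.symm ht),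
    add_zero, add_zero] at this

theorem Conserves.inflow_add_inflow [Fintype V] (hst : s ≠ t) {h : E → ℕ}
    (hc : G.Conserves s t h) :
    G.inflow h s + G.inflow h t = G.outflow h s + G.outflow h t := by
  have htotal := (G.sum_inflow h).trans (G.sum_outflow h).symm
  have hrest : ∑ v ∈ {s, t}ᶜ, G.inflow h v = ∑ v ∈ {s, t}ᶜ, G.outflow h v :=
    sum_congr rfl fun v hv => hc v (by simp_all) (by simp_all)
  rw [← sum_add_sum_compl {s, t}, ← sum_add_sum_compl {s, t} (G.outflow h), sum_pair hst,
    sum_pair hst, hrest] at htotal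
  exact add_right_cancel htotal

theorem Conserves.isCirculation_withReturnEdges [Fintype V] (hst : s ≠ t) {N : ℕ} {h : E → ℕ}
    (hc : G.Conserves s t h) (hv : G.flowValue s h = N) :
    (G.withReturnEdges s t N).IsCirculation (Sum.elim h 1) := by
  have hst' := hc.inflow_add_inflow hst
  rw [flowValue_eq_outflow_sub_inflow] at hv
  intro v
  simp only [inflow_withReturnEdges, outflow_withReturnEdges, Sum.elim_comp_inl, Sum.elim_inr,
    Pi.one_apply, sum_const, card_univ, Fintype.card_fin, smul_eq_mul, mul_one]
  by_cases hvs : v = s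
  · subst hvs
    simp only [if_neg hst.symm, if_true]
    omega
  · by_cases hvt : v = t
    · subst hvt
      simp only [if_neg hst, if_true]
      omega
    · simp only [if_neg (Ne.symm hvs), if_neg (Ne.symm hvt), add_zero]
      exact hc v hvs hvt

theorem Conserves.exists_eq_sum_isFlow [Fintype V] [DecidableEq E] (hst : s ≠ t) {N k : ℕ}
    (hk : 0 < k) {f : E → ℕ} (hc : G.Conserves s t f) (hv : G.flowValue s f = N)
    (hb : ∀ e, f e ≤ k) : ∃ F : Fin k → E → ℕ, (∀ j, G.IsFlow s t (F j)) ∧ f = ∑ j, F j := by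
  obtain ⟨g, hg, hg1, hsum⟩ := (hc.isCirculation_withReturnEdges hst hv).exists_eq_sum_binary
    (k := k) (by rintro (e | j); exacts [hb e, hk])
  refine ⟨fun j => g j ∘ Sum.inl, fun j => ⟨fun e => hg1 j _, (hg j).conserves_comp_inl⟩,
    funext fun e => ?_⟩
  simpa [Finset.sum_apply] using congrFun hsum (Sum.inl e)

end Flows

end Digraph'

/-- Let `f : E → ℕ` be an integral flow of `G` of value `λ(λ+1)`
with `f e ≤ λ+1` for critical edges and `f e ≤ λ` for non-critical edges. Then there
are `λ+1` maximum `(s,t)`-flows `f_1, …, f_{λ+1}` of `G` (each `{0,1}`-valued of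
value `λ`) with `f e = f_1 e + ⋯ + f_{λ+1} e` for every edge `e`. -/
theorem stmt7 {V E : Type} [Fintype V] [DecidableEq V] [Fintype E] [DecidableEq E]
    (G : Digraph' V E) (s t : V) (hst : s ≠ t) (lam : ℕ)
    (hmax : G.IsMaxFlowValue s t ∅ lam)
    (f : E → ℕ) (hcons : G.Conserves s t f)
    (hval : G.flowValue s f = lam * (lam + 1))
    (hbd : ∀ e, (G.Critical s t e → f e ≤ lam + 1) ∧ (¬ G.Critical s t e → f e ≤ lam)) :
    ∃ F : Fin (lam + 1) → E → ℕ,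
      (∀ j, G.IsFlow s t (F j) ∧ G.flowValue s (F j) = lam) ∧
      ∀ e, f e = ∑ j, F j e := by
  have hf : ∀ e, f e ≤ lam + 1 := fun e => by
    by_cases he : G.Critical s t e
    exacts [(hbd e).1 he, ((hbd e).2 he).trans lam.le_succ]
  obtain ⟨F, hF, hsum⟩ :=
    hcons.exists_eq_sum_isFlow hst (N := lam * (lam + 1)) lam.succ_pos (by exact_mod_cast hval) hf
  have hle : ∀ j ∈ univ, G.flowValue s (F j) ≤ lam := fun j _ => hmax.2 _ (hF j) (by simp)
  have htotal : ∑ j, G.flowValue s (F j) = ∑ _j : Fin (lam + 1), (lam : ℤ) := by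
    rw [← G.flowValue_sum, ← hsum, hval]
    simp [mul_comm]
  exact ⟨F, fun j => ⟨hF j, (sum_eq_sum_iff_of_le hle).1 htotal j (mem_univ j)⟩,
    fun e => by rw [hsum, Finset.sum_apply]⟩
end

section
/- For every maximum (s,t)-flow f of G and every edge e ∈ null_G(f, min+1), the two endpoints of e lie in distinct strongly connected components of the graph G_f − e (the residual graph of G with respect to f, with the edge e deleted). -/
open Finset

set_option linter.unusedSectionVars false in
set_option linter.unusedVariables false in
lemma Digraph'.cutflow {V E : Type} [Fintype V] [DecidableEq V] [Fintype E] [DecidableEq E]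
    (G : Digraph' V E) (s t : V) (f : E → ℕ) (hcons : G.Conserves s t f)
    (A : V → Prop) [DecidablePred A] (hs : A s) (ht : ¬ A t) :
    (∑ g ∈ univ.filter (fun g => A (G.src g) ∧ ¬ A (G.tgt g)), (f g : ℤ)) -
      ∑ g ∈ univ.filter (fun g => ¬ A (G.src g) ∧ A (G.tgt g)), (f g : ℤ) =
      G.flowValue s f := by
  have key : ∑ v ∈ univ.filter A,
      ((∑ g ∈ univ.filter (fun g => G.src g = v), (f g : ℤ)) -
        ∑ g ∈ univ.filter (fun g => G.tgt g = v), (f g : ℤ)) = G.flowValue s f := by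
    rw [Finset.sum_eq_single_of_mem s (by simp [hs])]
    · rfl
    · intro v hv hvs
      have hvA : A v := (Finset.mem_filter.mp hv).2
      have hvt : v ≠ t := fun h => ht (h ▸ hvA)
      have h := hcons v hvs hvt
      have h2 : (∑ g ∈ univ.filter (fun g => G.tgt g = v), (f g : ℤ)) =
          ∑ g ∈ univ.filter (fun g => G.src g = v), (f g : ℤ) := by exact_mod_cast h
      linarith
  rw [← key, Finset.sum_sub_distrib,
    Finset.sum_fiberwise_eq_sum_filter univ (univ.filter A) (fun g => G.src g)
      (fun g => (f g : ℤ)),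
    Finset.sum_fiberwise_eq_sum_filter univ (univ.filter A) (fun g => G.tgt g)
      (fun g => (f g : ℤ))]
  simp only [Finset.mem_filter, Finset.mem_univ, true_and]
  have h1 := Finset.sum_filter_add_sum_filter_not (univ.filter (fun g => A (G.src g)))
    (fun g => A (G.tgt g)) (fun g => (f g : ℤ))
  have h2 := Finset.sum_filter_add_sum_filter_not (univ.filter (fun g => A (G.tgt g)))
    (fun g => A (G.src g)) (fun g => (f g : ℤ))
  rw [Finset.filter_filter, Finset.filter_filter] at h1 h2
  have e1 : univ.filter (fun g => A (G.tgt g) ∧ A (G.src g)) =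
      univ.filter (fun g => A (G.src g) ∧ A (G.tgt g)) := by
    ext g; simp only [Finset.mem_filter]; tauto
  have e2 : univ.filter (fun g => A (G.tgt g) ∧ ¬ A (G.src g)) =
      univ.filter (fun g => ¬ A (G.src g) ∧ A (G.tgt g)) := by
    ext g; simp only [Finset.mem_filter]; tauto
  rw [e1, e2] at h2
  linarith

/-- Assume every vertex of `G` lies on a directed `(s,t)`-path. For
every maximum `(s,t)`-flow `f` of `G` and every edge `e ∈ null_G(f, min+1)` (i.e.
`f e = 0` and `e` lies in some minimal `(s,t)`-cut of cardinality `λ+1`), the two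
endpoints of `e` are not strongly connected in the residual graph `G_f` with the
edge `e` deleted; that is, they lie in distinct strongly connected components of
`G_f − e`. -/
theorem stmt9 {V E : Type} [Fintype V] [DecidableEq V] [Fintype E] [DecidableEq E]
    (G : Digraph' V E) (s t : V) (hst : s ≠ t)
    (hpath : ∀ v : V, G.ReachAvoid ∅ s v ∧ G.ReachAvoid ∅ v t)
    (lam : ℕ) (hmax : G.IsMaxFlowValue s t ∅ lam)
    (f : E → ℕ) (hf : G.IsFlow s t f) (hval : G.flowValue s f = lam)
    (e : E) (hfe : f e = 0)
    (hcut : ∃ C : Finset E, G.IsMinimalCut s t C ∧ C.card = lam + 1 ∧ e ∈ C) :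
    ¬ ((G.residual f).ReachAvoid {e} (G.src e) (G.tgt e) ∧
        (G.residual f).ReachAvoid {e} (G.tgt e) (G.src e)) := by
  
  classical
  obtain ⟨C, ⟨hCcut, hCmin⟩, hCcard, heC⟩ := hcut
  rintro ⟨huv, -⟩
  have hPt : G.ReachAvoid (C.erase e) s t :=
    not_not.mp (hCmin (C.erase e) (Finset.erase_ssubset heC))
  have hmem : ∀ g : E, g ∉ C.erase e → g ∈ C → g = e := by
    intro g hg hgC; by_contra hne; exact hg (Finset.mem_erase.mpr ⟨hne, hgC⟩)
  -- u = src e is reachable from s avoiding C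
  have hAu : G.ReachAvoid C s (G.src e) := by
    have main : ∀ y, G.ReachAvoid (C.erase e) s y →
        G.ReachAvoid C s y ∨ G.ReachAvoid C s (G.src e) := by
      intro y h
      have h' : Relation.ReflTransGen (G.stepAvoid (C.erase e)) s y := h
      clear h
      induction h' with
      | refl => exact Or.inl Relation.ReflTransGen.refl
      | @tail b c h1 h2 ih =>
        obtain ⟨g, hg, hs1, ht1⟩ := h2
        rcases ih with hx | hu
        · by_cases hgC : g ∈ C
          · have hbe : b = G.src e := by rw [← hs1, hmem g hg hgC]
            exact Or.inr (hbe ▸ hx)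
          · exact Or.inl (Relation.ReflTransGen.tail hx ⟨g, hgC, hs1, ht1⟩)
        · exact Or.inr hu
    rcases main t hPt with h | h
    · exact absurd h hCcut
    · exact h
  -- v = tgt e is NOT reachable from s avoiding C
  have hvnA : ¬ G.ReachAvoid C s (G.tgt e) := by
    intro hAv
    apply hCcut
    have main : ∀ y, G.ReachAvoid (C.erase e) s y → G.ReachAvoid C s y := by
      intro y h
      have h' : Relation.ReflTransGen (G.stepAvoid (C.erase e)) s y := h
      clear h
      induction h' with
      | refl => exact Relation.ReflTransGen.refl
      | @tail b c h1 h2 ih =>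
        obtain ⟨g, hg, hs1, ht1⟩ := h2
        by_cases hgC : g ∈ C
        · have hce : c = G.tgt e := by rw [← ht1, hmem g hg hgC]
          rw [hce]; exact hAv
        · exact Relation.ReflTransGen.tail ih ⟨g, hgC, hs1, ht1⟩
    exact main t hPt
  -- the cut-flow computation
  set A : V → Prop := fun x => G.ReachAvoid C s x with hAdef
  have hsA : A s := Relation.ReflTransGen.refl
  have hkey := G.cutflow s t f hf.2 A hsA hCcut
  rw [hval] at hkey
  -- every edge from A to non-A is in C
  have hOutC : ∀ g, A (G.src g) → ¬ A (G.tgt g) → g ∈ C := by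
    intro g h1 h2; by_contra hg
    exact h2 (Relation.ReflTransGen.tail h1 ⟨g, hg, rfl, rfl⟩)
  have hcarde : (C.erase e).card = lam := by
    rw [Finset.card_erase_of_mem heC, hCcard]; rfl
  have hsub : (univ.filter (fun g => A (G.src g) ∧ ¬ A (G.tgt g))).erase e ⊆ C.erase e := by
    intro g hg
    rw [Finset.mem_erase] at hg ⊢
    obtain ⟨hne, hg2⟩ := hg
    simp only [Finset.mem_filter, Finset.mem_univ, true_and] at hg2
    exact ⟨hne, hOutC g hg2.1 hg2.2⟩
  have hfeZ : ((f e : ℕ) : ℤ) = 0 := by exact_mod_cast hfe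
  have hsum_erase : ∑ g ∈ (univ.filter (fun g => A (G.src g) ∧ ¬ A (G.tgt g))).erase e,
      (f g : ℤ) = ∑ g ∈ univ.filter (fun g => A (G.src g) ∧ ¬ A (G.tgt g)), (f g : ℤ) :=
    Finset.sum_erase _ hfeZ
  have hcard_le : ((univ.filter (fun g => A (G.src g) ∧ ¬ A (G.tgt g))).erase e).card ≤ lam := by
    calc _ ≤ (C.erase e).card := Finset.card_le_card hsub
    _ = lam := hcarde
  have hterm_le : ∀ g ∈ (univ.filter (fun g => A (G.src g) ∧ ¬ A (G.tgt g))).erase e,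
      (f g : ℤ) ≤ 1 := by
    intro g _; exact_mod_cast hf.1 g
  have hOut_le : (∑ g ∈ univ.filter (fun g => A (G.src g) ∧ ¬ A (G.tgt g)), (f g : ℤ)) ≤ lam := by
    rw [← hsum_erase]
    calc ∑ g ∈ (univ.filter (fun g => A (G.src g) ∧ ¬ A (G.tgt g))).erase e, (f g : ℤ)
        ≤ ∑ _g ∈ (univ.filter (fun g => A (G.src g) ∧ ¬ A (G.tgt g))).erase e, (1 : ℤ) :=
          Finset.sum_le_sum hterm_le
    _ = ((univ.filter (fun g => A (G.src g) ∧ ¬ A (G.tgt g))).erase e).card := by simp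
    _ ≤ lam := by exact_mod_cast hcard_le
  have hIn_nonneg : (0 : ℤ) ≤ ∑ g ∈ univ.filter (fun g => ¬ A (G.src g) ∧ A (G.tgt g)),
      (f g : ℤ) := Finset.sum_nonneg (fun g _ => by positivity)
  have hIn_zero : ∑ g ∈ univ.filter (fun g => ¬ A (G.src g) ∧ A (G.tgt g)), (f g : ℤ) = 0 := by
    linarith
  have hIn0 : ∀ g ∈ univ.filter (fun g => ¬ A (G.src g) ∧ A (G.tgt g)), (f g : ℤ) = 0 :=
    (Finset.sum_eq_zero_iff_of_nonneg (fun g _ => by positivity)).mp hIn_zero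
  -- edges of Out minus e are saturated
  have hOut_sum : ∑ g ∈ (univ.filter (fun g => A (G.src g) ∧ ¬ A (G.tgt g))).erase e,
      (f g : ℤ) = lam := by rw [hsum_erase]; linarith
  have hOut1 : ∀ g ∈ (univ.filter (fun g => A (G.src g) ∧ ¬ A (G.tgt g))).erase e,
      (f g : ℤ) = 1 := by
    have hzero : ∑ g ∈ (univ.filter (fun g => A (G.src g) ∧ ¬ A (G.tgt g))).erase e,
        (1 - (f g : ℤ)) = 0 := by
      rw [Finset.sum_sub_distrib, Finset.sum_const, hOut_sum]
      have : (((univ.filter (fun g => A (G.src g) ∧ ¬ A (G.tgt g))).erase e).card : ℤ) ≤ lam := by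
        exact_mod_cast hcard_le
      have hge : (lam : ℤ) ≤ ((univ.filter (fun g => A (G.src g) ∧ ¬ A (G.tgt g))).erase e).card := by
        rw [← hOut_sum]
        calc ∑ g ∈ (univ.filter (fun g => A (G.src g) ∧ ¬ A (G.tgt g))).erase e, (f g : ℤ)
            ≤ ∑ _g ∈ (univ.filter (fun g => A (G.src g) ∧ ¬ A (G.tgt g))).erase e, (1 : ℤ) :=
              Finset.sum_le_sum hterm_le
        _ = _ := by simp
      simp only [nsmul_eq_mul, mul_one]
      linarith
    intro g hg
    have := (Finset.sum_eq_zero_iff_of_nonneg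
      (fun g hg => by have := hterm_le g hg; linarith)).mp hzero g hg
    linarith
  -- residual reachability from u stays in A
  have hstay : ∀ y, (G.residual f).ReachAvoid {e} (G.src e) y → A y := by
    intro y h
    have h' : Relation.ReflTransGen ((G.residual f).stepAvoid {e}) (G.src e) y := h
    clear h
    induction h' with
    | refl => exact hAu
    | @tail b c h1 h2 ih =>
      obtain ⟨g, hg, hs1, ht1⟩ := h2
      have hge : g ≠ e := by simpa using hg
      by_cases hfg : f g = 1
      · simp only [Digraph'.residual, hfg, if_true, ite_true] at hs1 ht1
        by_contra hc
        have hIn : g ∈ univ.filter (fun g => ¬ A (G.src g) ∧ A (G.tgt g)) := by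
          simp only [Finset.mem_filter, Finset.mem_univ, true_and]
          constructor
          · rw [ht1]; exact hc
          · rw [hs1]; exact ih
        have := hIn0 g hIn
        rw [hfg] at this; norm_num at this
      · have hf0 : f g = 0 := by have := hf.1 g; omega
        simp only [Digraph'.residual, hfg, if_false, ite_false] at hs1 ht1
        by_contra hc
        have hOutm : g ∈ (univ.filter (fun g => A (G.src g) ∧ ¬ A (G.tgt g))).erase e := by
          rw [Finset.mem_erase]
          refine ⟨hge, ?_⟩
          simp only [Finset.mem_filter, Finset.mem_univ, true_and]
          constructor
          · rw [hs1]; exact ih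
          · rw [ht1]; exact hc
        have := hOut1 g hOutm
        rw [hf0] at this; norm_num at this
  exact hvnA (hstay (G.tgt e) huv)
end
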